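/- arXiv:1909.06981 — 8 statements merged into one kernel-verified Lean document; each statement's English description precedes it below -/
import Mathlib

section
/- The α-Tsallis entropy T_α(p) = (1/(1−α))(Σ_i p_i^α − 1) on the probability simplex in ℝ^d is Lipschitz continuous with respect to total variation distance for α > 1, with optimal Lipschitz constant α/(α−1): for all probability vectors p, q, |T_α(p) − T_α(q)| ≤ (α/(α−1))·TV(p,q), and no smaller constant works. -/
/-!
For `x, y ∈ [0, 1]` the mean value theorem gives `x ^ α - y ^ α ≤ α · max (x - y) 0`, since the
derivative `α t ^ (α - 1)` is at most `α` there; summing over coordinates of two probability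
vectors, `∑ max (p i - q i) 0` is exactly their total variation distance.

Optimality comes from moving mass `ε` from one atom to another: the entropy changes by
`(1 - (1 - ε) ^ α - ε ^ α) / (α - 1)` while the distance is `ε`, and the ratio tends to
`α / (α - 1)` because `ε ↦ (1 - ε) ^ α + ε ^ α` has derivative `-α` at `0`.
-/

open Finset Real Filter Topology

noncomputable section

variable {ι : Type*} [Fintype ι]

def tsallisEntropy (α : ℝ) (p : ι → ℝ) : ℝ := 1 / (1 - α) * (∑ i, p i ^ α - 1)

def tvDist (p q : ι → ℝ) : ℝ := 1 / 2 * ∑ i, |p i - q i|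

lemma rpow_sub_rpow_le_mul_sub {α x y : ℝ} (hα : 1 ≤ α) (hy : 0 ≤ y) (hyx : y ≤ x)
    (hx : x ≤ 1) : x ^ α - y ^ α ≤ α * (x - y) := by
  have hderiv : ∀ t ∈ Set.Icc (0 : ℝ) 1,
      HasDerivWithinAt (fun t : ℝ => t ^ α) (α * t ^ (α - 1)) (Set.Icc 0 1) t :=
    fun t _ => (hasDerivAt_rpow_const (Or.inr hα)).hasDerivWithinAt
  have hbound : ∀ t ∈ Set.Icc (0 : ℝ) 1, ‖α * t ^ (α - 1)‖ ≤ α := fun t ht => by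
    rw [norm_mul, norm_of_nonneg (by linarith), norm_of_nonneg (rpow_nonneg ht.1 _)]
    exact mul_le_of_le_one_right (by linarith) (rpow_le_one ht.1 ht.2 (by linarith))
  have := (convex_Icc (0 : ℝ) 1).norm_image_sub_le_of_norm_hasDerivWithin_le hderiv hbound
    ⟨hy, hyx.trans hx⟩ ⟨hy.trans hyx, hx⟩
  rw [norm_eq_abs, norm_eq_abs, abs_of_nonneg (sub_nonneg.2 hyx)] at this
  exact (le_abs_self _).trans this

lemma rpow_sub_rpow_le_mul_max {α x y : ℝ} (hα : 1 ≤ α) (hx : x ∈ Set.Icc (0 : ℝ) 1)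
    (hy : y ∈ Set.Icc (0 : ℝ) 1) : x ^ α - y ^ α ≤ α * max (x - y) 0 := by
  rcases le_total y x with hyx | hxy
  · rw [max_eq_left (sub_nonneg.2 hyx)]
    exact rpow_sub_rpow_le_mul_sub hα hy.1 hyx hx.2
  · rw [max_eq_right (sub_nonpos.2 hxy), mul_zero, sub_nonpos]
    exact rpow_le_rpow hx.1 hxy (by linarith)

lemma sum_max_sub_zero_eq_tvDist {p q : ι → ℝ} (h : ∑ i, p i = ∑ i, q i) :
    ∑ i, max (p i - q i) 0 = tvDist p q := by
  have hmax : ∀ a : ℝ, max a 0 = 1 / 2 * (a + |a|) := fun a => by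
    rcases le_total a 0 with ha | ha
    · rw [max_eq_right ha, abs_of_nonpos ha]; ring
    · rw [max_eq_left ha, abs_of_nonneg ha]; ring
  simp only [hmax, ← mul_sum, sum_add_distrib, sum_sub_distrib, h, sub_self, zero_add, tvDist]

lemma sum_rpow_sub_sum_rpow_le {α : ℝ} (hα : 1 ≤ α) {p q : ι → ℝ} (hp : p ∈ stdSimplex ℝ ι)
    (hq : q ∈ stdSimplex ℝ ι) : ∑ i, p i ^ α - ∑ i, q i ^ α ≤ α * tvDist p q := by
  calc ∑ i, p i ^ α - ∑ i, q i ^ α = ∑ i, (p i ^ α - q i ^ α) := (sum_sub_distrib ..).symm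
    _ ≤ ∑ i, α * max (p i - q i) 0 := sum_le_sum fun i _ =>
      rpow_sub_rpow_le_mul_max hα (mem_Icc_of_mem_stdSimplex hp i)
        (mem_Icc_of_mem_stdSimplex hq i)
    _ = α * tvDist p q := by rw [← mul_sum, sum_max_sub_zero_eq_tvDist (hp.2.trans hq.2.symm)]

lemma tvDist_comm (p q : ι → ℝ) : tvDist p q = tvDist q p := by
  simp only [tvDist, abs_sub_comm]

lemma abs_tsallisEntropy_sub_le {α : ℝ} (hα : 1 < α) {p q : ι → ℝ} (hp : p ∈ stdSimplex ℝ ι)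
    (hq : q ∈ stdSimplex ℝ ι) :
    |tsallisEntropy α p - tsallisEntropy α q| ≤ α / (α - 1) * tvDist p q := by
  have hpq := sum_rpow_sub_sum_rpow_le hα.le hp hq
  have hqp := sum_rpow_sub_sum_rpow_le hα.le hq hp
  rw [tvDist_comm] at hqp
  have hdiff : tsallisEntropy α p - tsallisEntropy α q
      = (∑ i, p i ^ α - ∑ i, q i ^ α) / (1 - α) := by
    simp only [tsallisEntropy]; ring
  rw [hdiff, abs_div, abs_of_neg (by linarith : 1 - α < 0), neg_sub, div_mul_eq_mul_div,
    div_le_div_iff_of_pos_right (by linarith)]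
  exact abs_le.2 ⟨by linarith, hpq⟩

section TwoPoint

variable [DecidableEq ι]

def twoPoint (i j : ι) (t : ℝ) : ι → ℝ := fun k => if k = i then 1 - t else if k = j then t else 0

variable {i j : ι}

lemma sum_twoPoint_eq (hij : i ≠ j) (f : ℝ → ℝ) (hf : f 0 = 0) (t : ℝ) :
    ∑ k, f (twoPoint i j t k) = f (1 - t) + f t := by
  rw [Fintype.sum_eq_add i j hij fun k hk => by simp [twoPoint, hk.1, hk.2, hf]]
  simp [twoPoint, hij.symm]

lemma twoPoint_mem_stdSimplex (hij : i ≠ j) {t : ℝ} (ht : t ∈ Set.Icc (0 : ℝ) 1) :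
    twoPoint i j t ∈ stdSimplex ℝ ι := by
  refine ⟨fun k => ?_, by simpa using sum_twoPoint_eq hij id rfl t⟩
  unfold twoPoint
  split_ifs <;> linarith [ht.1, ht.2]

lemma tvDist_twoPoint_zero (hij : i ≠ j) {t : ℝ} (ht : 0 ≤ t) :
    tvDist (twoPoint i j 0) (twoPoint i j t) = t := by
  rw [tvDist, Fintype.sum_eq_add i j hij fun k hk => by simp [twoPoint, hk.1, hk.2]]
  simp [twoPoint, hij.symm, abs_of_nonneg ht]
  ring

lemma tsallisEntropy_twoPoint (hij : i ≠ j) {α : ℝ} (hα : 0 < α) (t : ℝ) :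
    tsallisEntropy α (twoPoint i j t) = ((1 - t) ^ α + t ^ α - 1) / (1 - α) := by
  rw [tsallisEntropy, sum_twoPoint_eq hij (· ^ α) (zero_rpow hα.ne') t]
  ring

end TwoPoint

lemma hasDerivAt_one_sub_rpow_add_rpow {α : ℝ} (hα : 1 < α) :
    HasDerivAt (fun t : ℝ => (1 - t) ^ α + t ^ α) (-α) 0 := by
  have hleft : HasDerivAt (fun t : ℝ => (1 - t) ^ α) (-α) 0 := by
    simpa using ((hasDerivAt_id (0 : ℝ)).const_sub 1).rpow_const (p := α) (Or.inr hα.le)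
  have hright : HasDerivAt (fun t : ℝ => t ^ α) 0 0 := by
    simpa [zero_rpow (by linarith : α - 1 ≠ 0)] using hasDerivAt_rpow_const (x := 0) (Or.inr hα.le)
  simpa only [add_zero] using hleft.fun_add hright

section Lipschitz

variable [DecidableEq ι] {α k : ℝ} {i j : ι}

lemma one_sub_rpow_sub_rpow_le_of_tsallisEntropy_lipschitz (hα : 1 < α) (hij : i ≠ j)
    (hk : ∀ p q : ι → ℝ, p ∈ stdSimplex ℝ ι → q ∈ stdSimplex ℝ ι →
      |tsallisEntropy α p - tsallisEntropy α q| ≤ k * tvDist p q)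
    {t : ℝ} (ht : t ∈ Set.Icc (0 : ℝ) 1) :
    1 - (1 - t) ^ α - t ^ α ≤ k * (α - 1) * t := by
  have hpq := hk _ _ (twoPoint_mem_stdSimplex hij (t := 0) (by simp))
    (twoPoint_mem_stdSimplex hij ht)
  rw [tvDist_twoPoint_zero hij ht.1, tsallisEntropy_twoPoint hij (by linarith),
    tsallisEntropy_twoPoint hij (by linarith)] at hpq
  have hdiv : (1 - (1 - t) ^ α - t ^ α) / (α - 1) ≤ k * t := by
    refine le_trans (le_of_eq ?_) ((neg_le_abs _).trans hpq)
    rw [zero_rpow (by linarith), sub_zero, one_rpow, show α - 1 = -(1 - α) by ring, div_neg]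
    ring
  rw [div_le_iff₀ (by linarith)] at hdiv
  linarith

lemma div_sub_one_le_of_tsallisEntropy_lipschitz (hα : 1 < α) (hij : i ≠ j)
    (hk : ∀ p q : ι → ℝ, p ∈ stdSimplex ℝ ι → q ∈ stdSimplex ℝ ι →
      |tsallisEntropy α p - tsallisEntropy α q| ≤ k * tvDist p q) :
    α / (α - 1) ≤ k := by
  set g : ℝ → ℝ := fun t => (1 - t) ^ α + t ^ α
  have hslope : Tendsto (slope g 0) (𝓝[>] 0) (𝓝 (-α)) :=
    (hasDerivAt_iff_tendsto_slope.1 (hasDerivAt_one_sub_rpow_add_rpow hα)).mono_left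
      (nhdsWithin_mono _ fun t ht => ne_of_gt ht)
  have hbound : ∀ᶠ t in 𝓝[>] 0, -(k * (α - 1)) ≤ slope g 0 t := by
    filter_upwards [Ioo_mem_nhdsGT (zero_lt_one' ℝ)] with t ht
    have := one_sub_rpow_sub_rpow_le_of_tsallisEntropy_lipschitz hα hij hk ⟨ht.1.le, ht.2.le⟩
    have hg0 : g 0 = 1 := by simp [g, zero_rpow (by linarith : α ≠ 0)]
    rw [slope_def_field, hg0, sub_zero, le_div_iff₀ ht.1]
    linarith
  have hle : -(k * (α - 1)) ≤ -α := ge_of_tendsto hslope hbound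
  rw [div_le_iff₀ (by linarith)]
  linarith

end Lipschitz

/-- The α-Tsallis entropy is Lipschitz w.r.t. total variation distance for α > 1,
with optimal Lipschitz constant α/(α-1). -/
theorem stmt5 {d : ℕ} (hd : 2 ≤ d) (α : ℝ) (hα : 1 < α)
    (T : (Fin d → ℝ) → ℝ)
    (hT : ∀ p, T p = (1 / (1 - α)) * ((∑ i, p i ^ α) - 1)) :
    (∀ p q : Fin d → ℝ,
        ((∀ i, 0 ≤ p i) ∧ ∑ i, p i = 1) → ((∀ i, 0 ≤ q i) ∧ ∑ i, q i = 1) →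
        |T p - T q| ≤ (α / (α - 1)) * ((1 / 2) * ∑ i, |p i - q i|)) ∧
      (∀ k : ℝ,
        (∀ p q : Fin d → ℝ,
          ((∀ i, 0 ≤ p i) ∧ ∑ i, p i = 1) → ((∀ i, 0 ≤ q i) ∧ ∑ i, q i = 1) →
          |T p - T q| ≤ k * ((1 / 2) * ∑ i, |p i - q i|)) →
        α / (α - 1) ≤ k) := by
  obtain rfl : T = tsallisEntropy α := funext hT
  exact ⟨fun p q hp hq => abs_tsallisEntropy_sub_le hα hp hq, fun k hk =>
    div_sub_one_le_of_tsallisEntropy_lipschitz hα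
      (i := ⟨0, by omega⟩) (j := ⟨1, by omega⟩) (by simp [Fin.ext_iff]) hk⟩

end
end

section
/- For α > 1 and probability vectors p, q in ℝ^d with TV(p,q) ≤ ε, the α-Rényi entropies satisfy |H_α(p) − H_α(q)| ≤ (d·α/(α−1))·ε/ln 2, where H_α(p) = (1/(1−α))·log₂(Σ_i p_i^α). -/
/-!
Write `S x = ∑ i, x i ^ α` and move along the segment `r t = q + t (p - q)`, `t ∈ [0, 1]`.
Since `∑ i, (p i - q i) = 0`, the derivative `∑ i, α r_i^(α-1) (p i - q i)` is at most
`α m^(α-1) TV(p, q)` in absolute value, where `m = max_i r_i ≥ 1/d`; as `S (r t) ≥ m^α`,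
the logarithmic derivative of `S ∘ r` is bounded by `d α TV(p, q)`, and the mean value
inequality bounds `|log S p - log S q|`. Dividing by `(α - 1) log 2` gives the claim.
-/

open Finset Real

section

variable {ι : Type*} [Fintype ι]

lemma abs_sum_mul_le_of_sum_eq_zero (w Δ : ι → ℝ) {M : ℝ} (hw : ∀ i, 0 ≤ w i ∧ w i ≤ M)
    (hΔ : ∑ i, Δ i = 0) : |∑ i, w i * Δ i| ≤ M / 2 * ∑ i, |Δ i| := by
  -- Shifting `w` by the constant `M / 2` leaves the sum unchanged, and `|w i - M / 2| ≤ M / 2`.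
  have hshift : ∑ i, w i * Δ i = ∑ i, (w i - M / 2) * Δ i := by
    simp only [sub_mul, sum_sub_distrib, ← mul_sum, hΔ, mul_zero, sub_zero]
  calc |∑ i, w i * Δ i| = |∑ i, (w i - M / 2) * Δ i| := by rw [hshift]
    _ ≤ ∑ i, |(w i - M / 2) * Δ i| := abs_sum_le_sum_abs _ _
    _ ≤ ∑ i, M / 2 * |Δ i| := by
        gcongr with i
        rw [abs_mul]
        gcongr
        exact abs_le.2 ⟨by linarith [hw i], by linarith [hw i]⟩
    _ = M / 2 * ∑ i, |Δ i| := (mul_sum ..).symm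

lemma exists_forall_le_and_one_le_card_mul (r : ι → ℝ) (hr : ∑ i, r i = 1) :
    ∃ j, (∀ i, r i ≤ r j) ∧ 1 ≤ Fintype.card ι * r j := by
  have : Nonempty ι := by
    by_contra h
    rw [not_nonempty_iff] at h
    simp at hr
  obtain ⟨j, -, hj⟩ := exists_max_image univ r univ_nonempty
  refine ⟨j, fun i => hj i (mem_univ i), ?_⟩
  calc (1 : ℝ) = ∑ i, r i := hr.symm
    _ ≤ ∑ _i : ι, r j := sum_le_sum fun i _ => hj i (mem_univ i)
    _ = Fintype.card ι * r j := by simp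

lemma sum_rpow_pos (α : ℝ) (r : ι → ℝ) (hr0 : ∀ i, 0 ≤ r i) (hr1 : ∑ i, r i = 1) :
    0 < ∑ i, r i ^ α := by
  obtain ⟨j, -, hj⟩ := exists_forall_le_and_one_le_card_mul r hr1
  have hrj : 0 < r j := by nlinarith [Nat.cast_nonneg (α := ℝ) (Fintype.card ι)]
  exact sum_pos' (fun i _ => rpow_nonneg (hr0 i) α) ⟨j, mem_univ j, rpow_pos_of_pos hrj α⟩

lemma abs_sum_deriv_rpow_le {α : ℝ} (hα : 1 ≤ α) (r Δ : ι → ℝ) (hr0 : ∀ i, 0 ≤ r i)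
    (hr1 : ∑ i, r i = 1) (hΔ : ∑ i, Δ i = 0) :
    |∑ i, α * r i ^ (α - 1) * Δ i|
      ≤ Fintype.card ι * α * ((1 / 2) * ∑ i, |Δ i|) * ∑ i, r i ^ α := by
  obtain ⟨j, hj, hcard⟩ := exists_forall_le_and_one_le_card_mul r hr1
  have hrj : 0 < r j := by nlinarith [Nat.cast_nonneg (α := ℝ) (Fintype.card ι)]
  have hw : ∀ i, 0 ≤ α * r i ^ (α - 1) ∧ α * r i ^ (α - 1) ≤ α * r j ^ (α - 1) := fun i =>
    ⟨by have := rpow_nonneg (hr0 i) (α - 1); positivity,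
      mul_le_mul_of_nonneg_left (rpow_le_rpow (hr0 i) (hj i) (by linarith)) (by linarith)⟩
  have hmax : r j ^ α ≤ ∑ i, r i ^ α :=
    single_le_sum (f := fun i => r i ^ α) (fun i _ => rpow_nonneg (hr0 i) α) (mem_univ j)
  have hpow : r j ^ (α - 1) ≤ Fintype.card ι * r j ^ α := by
    have : r j ^ α = r j ^ (α - 1) * r j := by rw [← rpow_add_one hrj.ne']; norm_num
    rw [this]
    nlinarith [rpow_nonneg hrj.le (α - 1)]
  calc |∑ i, α * r i ^ (α - 1) * Δ i| ≤ α * r j ^ (α - 1) / 2 * ∑ i, |Δ i| :=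
        abs_sum_mul_le_of_sum_eq_zero _ Δ hw hΔ
    _ = α * ((1 / 2) * ∑ i, |Δ i|) * r j ^ (α - 1) := by ring
    _ ≤ α * ((1 / 2) * ∑ i, |Δ i|) * (Fintype.card ι * r j ^ α) := by gcongr
    _ ≤ α * ((1 / 2) * ∑ i, |Δ i|) * (Fintype.card ι * ∑ i, r i ^ α) := by gcongr
    _ = Fintype.card ι * α * ((1 / 2) * ∑ i, |Δ i|) * ∑ i, r i ^ α := by ring

lemma hasDerivAt_sum_rpow_add_mul {α : ℝ} (hα : 1 ≤ α) (q Δ : ι → ℝ) (t : ℝ) :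
    HasDerivAt (fun s => ∑ i, (q i + s * Δ i) ^ α)
      (∑ i, α * (q i + t * Δ i) ^ (α - 1) * Δ i) t := by
  refine HasDerivAt.fun_sum fun i _ => ?_
  have hline : HasDerivAt (fun s => q i + s * Δ i) (Δ i) t := by
    simpa using ((hasDerivAt_id t).mul_const (Δ i)).const_add (q i)
  exact (hasDerivAt_rpow_const (Or.inr hα)).comp t hline

lemma abs_log_sum_rpow_sub_le {α : ℝ} (hα : 1 ≤ α) (p q : ι → ℝ)
    (hp0 : ∀ i, 0 ≤ p i) (hp1 : ∑ i, p i = 1) (hq0 : ∀ i, 0 ≤ q i) (hq1 : ∑ i, q i = 1) :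
    |log (∑ i, p i ^ α) - log (∑ i, q i ^ α)|
      ≤ Fintype.card ι * α * ((1 / 2) * ∑ i, |p i - q i|) := by
  set Δ : ι → ℝ := fun i => p i - q i
  have hΔ : ∑ i, Δ i = 0 := by simp only [Δ, sum_sub_distrib, hp1, hq1, sub_self]
  have hr0 : ∀ t ∈ Set.Icc (0 : ℝ) 1, ∀ i, 0 ≤ q i + t * Δ i := fun t ht i => by
    have : q i + t * Δ i = (1 - t) * q i + t * p i := by ring
    rw [this]
    have := ht.1; have := ht.2; have := hp0 i; have := hq0 i
    positivity
  have hr1 : ∀ t, ∑ i, (q i + t * Δ i) = 1 := fun t => by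
    rw [sum_add_distrib, ← mul_sum, hΔ, hq1, mul_zero, add_zero]
  have hderiv : ∀ t ∈ Set.Icc (0 : ℝ) 1,
      HasDerivWithinAt (fun s => log (∑ i, (q i + s * Δ i) ^ α))
        ((∑ i, α * (q i + t * Δ i) ^ (α - 1) * Δ i) / ∑ i, (q i + t * Δ i) ^ α)
        (Set.Icc 0 1) t := fun t ht =>
    ((hasDerivAt_sum_rpow_add_mul hα q Δ t).log
      (sum_rpow_pos α _ (hr0 t ht) (hr1 t)).ne').hasDerivWithinAt
  have hbound := norm_image_sub_le_of_norm_deriv_le_segment_01' hderiv fun t ht => by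
    have hrt := hr0 t (Set.Ico_subset_Icc_self ht)
    have hS := sum_rpow_pos α _ hrt (hr1 t)
    rw [norm_div, norm_of_nonneg hS.le, div_le_iff₀ hS, Real.norm_eq_abs]
    exact abs_sum_deriv_rpow_le hα _ Δ hrt (hr1 t) hΔ
  simpa [Δ] using hbound

end

theorem stmt6_general {d : ℕ} (α : ℝ) (hα : 1 < α) (ε : ℝ)
    (H : (Fin d → ℝ) → ℝ)
    (hH : ∀ p, H p = (1 / (1 - α)) * Real.logb 2 (∑ i, p i ^ α))
    (p q : Fin d → ℝ)
    (hp : (∀ i, 0 ≤ p i) ∧ ∑ i, p i = 1) (hq : (∀ i, 0 ≤ q i) ∧ ∑ i, q i = 1)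
    (hTV : (1 / 2) * ∑ i, |p i - q i| ≤ ε) :
    |H p - H q| ≤ ((d : ℝ) * α / (α - 1)) * ε / Real.log 2 := by
  have hlog := abs_log_sum_rpow_sub_le hα.le p q hp.1 hp.2 hq.1 hq.2
  rw [Fintype.card_fin, abs_sub_comm] at hlog
  have hα1 : 0 < α - 1 := by linarith
  have hscale : 0 < (α - 1) * Real.log 2 := mul_pos hα1 (log_pos one_lt_two)
  have hdiff : H p - H q
      = (log (∑ i, q i ^ α) - log (∑ i, p i ^ α)) / ((α - 1) * Real.log 2) := by
    rw [hH, hH, Real.logb, Real.logb, show 1 - α = -(α - 1) by ring]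
    field_simp
    ring
  rw [hdiff, abs_div, abs_of_pos hscale, div_le_iff₀ hscale]
  calc _ ≤ (d : ℝ) * α * ((1 / 2) * ∑ i, |p i - q i|) := hlog
    _ ≤ (d : ℝ) * α * ε := by gcongr
    _ = _ := by field_simp [hα1.ne']

/-- Lipschitz-type continuity bound for the α-Rényi entropy, α > 1. -/
theorem stmt6 {d : ℕ} (hd : 2 ≤ d) (α : ℝ) (hα : 1 < α) (ε : ℝ) (hε : 0 ≤ ε)
    (H : (Fin d → ℝ) → ℝ)
    (hH : ∀ p, H p = (1 / (1 - α)) * Real.logb 2 (∑ i, p i ^ α))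
    (p q : Fin d → ℝ)
    (hp : (∀ i, 0 ≤ p i) ∧ ∑ i, p i = 1) (hq : (∀ i, 0 ≤ q i) ∧ ∑ i, q i = 1)
    (hTV : (1 / 2) * ∑ i, |p i - q i| ≤ ε) :
    |H p - H q| ≤ ((d : ℝ) * α / (α - 1)) * ε / Real.log 2 :=
  stmt6_general α hα ε H hH p q hp hq hTV
end

section
/- The min-entropy H_∞(p) = −log₂(max_i p_i) on the probability simplex in ℝ^d is Lipschitz continuous with respect to total variation distance with optimal Lipschitz constant d/ln 2. -/
/-!
The maximum coordinate of a vector summing to `1` over `d` points is at least `1 / d`, and on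
`[1 / d, ∞)` the logarithm is `d`-Lipschitz. The maximum coordinate itself moves by at most the
total variation distance, which equals the sum of the positive parts of `q - p`. Hence `H_∞` is
`d / ln 2`-Lipschitz. For optimality, moving mass `ε` between two coordinates of the uniform
distribution costs `ε` in total variation and changes `H_∞` by
`log₂ (1 + d ε) ≥ d ε / ((1 + d ε) ln 2)`, so every Lipschitz constant is at least
`d / ((1 + d ε) ln 2)`; let `ε → 0`.
-/

open Finset Real

theorem abs_log_sub_log_le_div {a b c : ℝ} (hc : 0 < c) (ha : c ≤ a) (hb : c ≤ b) :
    |log a - log b| ≤ |a - b| / c := by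
  wlog hba : b ≤ a generalizing a b
  · rw [abs_sub_comm, abs_sub_comm a]
    exact this hb ha (le_of_not_ge hba)
  have hb0 : 0 < b := hc.trans_le hb
  have hlog : log a - log b ≤ (a - b) / b := by
    rw [← log_div (hc.trans_le ha).ne' hb0.ne', sub_div, div_self hb0.ne']
    exact log_le_sub_one_of_pos (div_pos (hc.trans_le ha) hb0)
  rw [abs_of_nonneg (sub_nonneg.2 (log_le_log hb0 hba)), abs_of_nonneg (sub_nonneg.2 hba)]
  exact hlog.trans (div_le_div_of_nonneg_left (sub_nonneg.2 hba) hc hb)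

theorem div_add_le_log_add_sub_log {c ε : ℝ} (hc : 0 < c) (hε : 0 ≤ ε) :
    ε / (c + ε) ≤ log (c + ε) - log c := by
  have hcε : 0 < c + ε := by linarith
  have h := one_sub_inv_le_log_of_pos (div_pos hcε hc)
  rwa [log_div hcε.ne' hc.ne', inv_div, one_sub_div hcε.ne', add_sub_cancel_left] at h

theorem le_of_forall_mem_Ioc_le {f : ℝ → ℝ} {δ k : ℝ} (hf : ContinuousWithinAt f (Set.Ioi 0) 0)
    (hδ : 0 < δ) (h : ∀ ε ∈ Set.Ioc 0 δ, f ε ≤ k) : f 0 ≤ k :=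
  le_of_tendsto hf (Filter.eventually_of_mem (Ioc_mem_nhdsGT hδ) h)

section SupOfSumEqOne

variable {ι : Type*} [Fintype ι]

theorem sum_posPart_sub_eq_half_sum_abs_sub {p q : ι → ℝ} (h : ∑ i, p i = ∑ i, q i) :
    ∑ i, (q i - p i)⁺ = 1 / 2 * ∑ i, |p i - q i| := by
  have two_mul_posPart (x : ℝ) : 2 * x⁺ = x + |x| := by
    rw [← posPart_add_negPart x]; nth_rewrite 2 [← posPart_sub_negPart x]; ring
  have hsum : 2 * ∑ i, (q i - p i)⁺ = ∑ i, |p i - q i| := by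
    simp_rw [mul_sum, two_mul_posPart, sum_add_distrib, sum_sub_distrib, h, sub_self, zero_add,
      abs_sub_comm]
  linarith

theorem sup'_sub_sup'_le_sum_posPart (hne : (univ : Finset ι).Nonempty) (p q : ι → ℝ) :
    univ.sup' hne q - univ.sup' hne p ≤ ∑ i, (q i - p i)⁺ := by
  obtain ⟨j, -, hj⟩ := exists_mem_eq_sup' hne q
  calc univ.sup' hne q - univ.sup' hne p ≤ q j - p j := by
        rw [hj]; gcongr; exact le_sup' p (mem_univ j)
    _ ≤ (q j - p j)⁺ := le_posPart _
    _ ≤ ∑ i, (q i - p i)⁺ :=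
        single_le_sum (f := fun i => (q i - p i)⁺) (fun i _ => posPart_nonneg _) (mem_univ j)

theorem abs_sup'_sub_sup'_le_half_sum_abs_sub (hne : (univ : Finset ι).Nonempty) {p q : ι → ℝ}
    (h : ∑ i, p i = ∑ i, q i) :
    |univ.sup' hne p - univ.sup' hne q| ≤ 1 / 2 * ∑ i, |p i - q i| := by
  rw [abs_sub_le_iff]
  constructor
  · have := sup'_sub_sup'_le_sum_posPart hne q p
    rw [sum_posPart_sub_eq_half_sum_abs_sub h.symm] at this
    simpa only [abs_sub_comm] using this
  · simpa only [sum_posPart_sub_eq_half_sum_abs_sub h] using sup'_sub_sup'_le_sum_posPart hne p q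

theorem inv_card_le_sup' (hne : (univ : Finset ι).Nonempty) {p : ι → ℝ} (hp : ∑ i, p i = 1) :
    (Fintype.card ι : ℝ)⁻¹ ≤ univ.sup' hne p := by
  have hcard : (0 : ℝ) < Fintype.card ι := by exact_mod_cast Fintype.card_pos_iff.2 hne.to_type
  have h : ∑ i, p i ≤ Fintype.card ι • univ.sup' hne p :=
    sum_le_card_nsmul _ _ _ fun i _ => le_sup' p (mem_univ i)
  rw [hp, nsmul_eq_mul] at h
  rwa [inv_le_iff_one_le_mul₀' hcard]

theorem abs_log_sup'_sub_log_sup'_le (hne : (univ : Finset ι).Nonempty) {p q : ι → ℝ}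
    (hp : ∑ i, p i = 1) (hq : ∑ i, q i = 1) :
    |log (univ.sup' hne p) - log (univ.sup' hne q)|
      ≤ Fintype.card ι * (1 / 2 * ∑ i, |p i - q i|) := by
  have hcard : (0 : ℝ) < (Fintype.card ι : ℝ)⁻¹ := by
    simpa using Fintype.card_pos_iff.2 hne.to_type
  calc |log (univ.sup' hne p) - log (univ.sup' hne q)|
      ≤ |univ.sup' hne p - univ.sup' hne q| / (Fintype.card ι : ℝ)⁻¹ :=
        abs_log_sub_log_le_div hcard (inv_card_le_sup' hne hp) (inv_card_le_sup' hne hq)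
    _ ≤ Fintype.card ι * (1 / 2 * ∑ i, |p i - q i|) := by
        rw [div_inv_eq_mul, mul_comm]
        gcongr
        exact abs_sup'_sub_sup'_le_half_sum_abs_sub hne (hp.trans hq.symm)

end SupOfSumEqOne

section MoveMass

variable {ι : Type*} [DecidableEq ι]

def moveMass (i j : ι) (ε : ℝ) (p : ι → ℝ) : ι → ℝ :=
  p + Pi.single j ε - Pi.single i ε

theorem sum_moveMass [Fintype ι] (i j : ι) (ε : ℝ) (p : ι → ℝ) :
    ∑ k, moveMass i j ε p k = ∑ k, p k := by
  simp [moveMass, sum_sub_distrib, sum_add_distrib]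

theorem moveMass_nonneg {i j : ι} {ε : ℝ} {p : ι → ℝ} (hp : ∀ k, 0 ≤ p k) (hε : 0 ≤ ε)
    (hεp : ε ≤ p i) (k : ι) : 0 ≤ moveMass i j ε p k := by
  have := hp k
  simp only [moveMass, Pi.add_apply, Pi.sub_apply, Pi.single_apply]
  split_ifs with hj hi hi <;> subst_vars <;> linarith

theorem sum_abs_sub_moveMass [Fintype ι] {i j : ι} (hij : i ≠ j) (ε : ℝ) (p : ι → ℝ) :
    ∑ k, |p k - moveMass i j ε p k| = 2 * |ε| := by
  have h : ∀ k, |p k - moveMass i j ε p k|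
      = (Pi.single i |ε| : ι → ℝ) k + (Pi.single j |ε| : ι → ℝ) k := by
    intro k
    simp only [moveMass, Pi.add_apply, Pi.sub_apply, Pi.single_apply]
    split_ifs with hj hi hi <;> subst_vars <;> simp_all [abs_neg]
  simp [h, sum_add_distrib, two_mul]

theorem sup'_moveMass_const [Fintype ι] (hne : (univ : Finset ι).Nonempty) {i j : ι} (hij : i ≠ j)
    {ε : ℝ} (hε : 0 ≤ ε) (c : ℝ) : univ.sup' hne (moveMass i j ε fun _ => c) = c + ε := by
  have hval : ∀ k, moveMass i j ε (fun _ => c) k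
      = c + (Pi.single j ε : ι → ℝ) k - (Pi.single i ε : ι → ℝ) k :=
    fun _ => rfl
  refine le_antisymm (sup'_le _ _ fun k _ => ?_) ?_
  · rw [hval]
    simp only [Pi.single_apply]
    split_ifs <;> linarith
  · calc c + ε = moveMass i j ε (fun _ => c) j := by simp [hval, hij]
      _ ≤ _ := le_sup' _ (mem_univ j)

end MoveMass

/-- The min-entropy `H_∞(p) = -log₂ (max_i p_i)` is Lipschitz w.r.t. total variation
distance, with optimal Lipschitz constant `d / ln 2`. -/
theorem stmt7 {d : ℕ} (hd : 2 ≤ d)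
    (Hinf : (Fin d → ℝ) → ℝ)
    (hHinf : ∀ p, Hinf p =
      -Real.logb 2 (Finset.univ.sup' (Finset.univ_nonempty_iff.mpr ⟨⟨0, by omega⟩⟩) p)) :
    (∀ p q : Fin d → ℝ,
        ((∀ i, 0 ≤ p i) ∧ ∑ i, p i = 1) → ((∀ i, 0 ≤ q i) ∧ ∑ i, q i = 1) →
        |Hinf p - Hinf q| ≤ ((d : ℝ) / Real.log 2) * ((1 / 2) * ∑ i, |p i - q i|)) ∧
      (∀ k : ℝ,
        (∀ p q : Fin d → ℝ,
          ((∀ i, 0 ≤ p i) ∧ ∑ i, p i = 1) → ((∀ i, 0 ≤ q i) ∧ ∑ i, q i = 1) →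
          |Hinf p - Hinf q| ≤ k * ((1 / 2) * ∑ i, |p i - q i|)) →
        (d : ℝ) / Real.log 2 ≤ k) := by
  have hne : (univ : Finset (Fin d)).Nonempty := univ_nonempty_iff.2 ⟨⟨0, by omega⟩⟩
  have hlog2 : 0 < log 2 := log_pos one_lt_two
  have abs_Hinf_sub (p q : Fin d → ℝ) :
      |Hinf p - Hinf q| = |log (univ.sup' hne p) - log (univ.sup' hne q)| / log 2 := by
    rw [hHinf, hHinf, logb, logb, neg_sub_neg, ← sub_div, abs_div, abs_of_pos hlog2,
      abs_sub_comm]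
  refine ⟨fun p q hp hq => ?_, fun k hk => ?_⟩
  · rw [abs_Hinf_sub, div_mul_eq_mul_div]
    gcongr
    simpa using abs_log_sup'_sub_log_sup'_le hne hp.2 hq.2
  · set c : ℝ := (d : ℝ)⁻¹
    have hc : 0 < c := by positivity
    set u : Fin d → ℝ := fun _ => c
    have hu : (∀ i, 0 ≤ u i) ∧ ∑ i, u i = 1 :=
      ⟨fun _ => hc.le, by simp [u, c, mul_inv_cancel₀ (show (d : ℝ) ≠ 0 by positivity)]⟩
    have h01 : (⟨0, by omega⟩ : Fin d) ≠ ⟨1, by omega⟩ := by simp [Fin.ext_iff]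
    have bound : ∀ ε ∈ Set.Ioc 0 c, 1 / ((c + ε) * log 2) ≤ k := by
      rintro ε ⟨hε, hεc⟩
      set q := moveMass ⟨0, by omega⟩ ⟨1, by omega⟩ ε u
      have hq : (∀ i, 0 ≤ q i) ∧ ∑ i, q i = 1 :=
        ⟨moveMass_nonneg hu.1 hε.le hεc, (sum_moveMass _ _ _ _).trans hu.2⟩
      have hlip := hk u q hu hq
      rw [abs_Hinf_sub, sum_abs_sub_moveMass h01, abs_of_pos hε, sup'_moveMass_const hne h01 hε.le,
        sup'_const, abs_sub_comm, abs_of_nonneg (sub_nonneg.2 (log_le_log hc (by linarith)))]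
        at hlip
      refine le_of_mul_le_mul_left ?_ hε
      calc ε * (1 / ((c + ε) * log 2)) = ε / (c + ε) / log 2 := by field_simp
        _ ≤ (log (c + ε) - log c) / log 2 := by gcongr; exact div_add_le_log_add_sub_log hc hε.le
        _ ≤ k * (1 / 2 * (2 * ε)) := hlip
        _ = ε * k := by ring
    have hcont : ContinuousWithinAt (fun ε => 1 / ((c + ε) * log 2)) (Set.Ioi 0) 0 := by
      fun_prop (disch := positivity)
    simpa [c, div_eq_mul_inv, mul_comm] using le_of_forall_mem_Ioc_le hcont hc bound
end

section
/- The α-Rényi entropy H_α on the probability simplex in ℝ^d (d ≥ 2) is not Lipschitz continuous with respect to total variation distance when 0 < α ≤ 1: for every constant k there exist probability vectors p, q with |H_α(p) − H_α(q)| > k·TV(p,q). -/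
/-!
Moving mass `ε` from one atom of a point mass to another is a move of size `ε` in total
variation, but it raises the Shannon entropy from `0` to at least `-ε log₂ ε`, and `-log₂ ε` is
unbounded as `ε → 0`. For `α < 1` the Rényi entropy dominates the Shannon entropy (weighted
AM-GM with weights `pᵢ` at the points `pᵢ ^ (α - 1)`), so the same pair of distributions works.
-/

open Finset Real

variable {ι : Type*} [Fintype ι]

noncomputable def shannonEntropy (p : ι → ℝ) : ℝ := -∑ i, p i * logb 2 (p i)

noncomputable def renyiEntropy (α : ℝ) (p : ι → ℝ) : ℝ := 1 / (1 - α) * logb 2 (∑ i, p i ^ α)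

lemma neg_mul_logb_le_shannonEntropy {p : ι → ℝ} (hp : p ∈ stdSimplex ℝ ι) (j : ι) :
    -(p j * logb 2 (p j)) ≤ shannonEntropy p := by
  rw [shannonEntropy, ← sum_neg_distrib]
  refine single_le_sum (f := fun i ↦ -(p i * logb 2 (p i))) (fun i _ ↦ ?_) (mem_univ j)
  obtain ⟨h0, h1⟩ := mem_Icc_of_mem_stdSimplex hp i
  exact neg_nonneg.2 (mul_nonpos_of_nonneg_of_nonpos h0 (logb_nonpos one_lt_two h0 h1))

lemma shannonEntropy_le_renyiEntropy {p : ι → ℝ} (hp : p ∈ stdSimplex ℝ ι) {α : ℝ}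
    (hα0 : 0 < α) (hα1 : α < 1) : shannonEntropy p ≤ renyiEntropy α p := by
  obtain ⟨hp0, hp1⟩ := hp
  have amgm := geom_mean_le_arith_mean_weighted univ p (fun i ↦ p i ^ (α - 1))
    (fun i _ ↦ hp0 i) hp1 (fun i _ ↦ rpow_nonneg (hp0 i) _)
  have hfactor (i : ι) : (p i ^ (α - 1)) ^ p i = p i ^ ((α - 1) * p i) :=
    (rpow_mul (hp0 i) _ _).symm
  have hterm (i : ι) : p i * p i ^ (α - 1) = p i ^ α := by
    rcases (hp0 i).eq_or_lt with h | h
    · simp [← h, zero_rpow hα0.ne']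
    · rw [rpow_sub_one h.ne', mul_div_cancel₀ _ h.ne']
  have hlog (i : ι) : log (p i ^ ((α - 1) * p i)) = (α - 1) * (p i * log (p i)) := by
    rcases (hp0 i).eq_or_lt with h | h
    · simp [← h]
    · rw [log_rpow h]; ring
  have hpos (i : ι) : 0 < p i ^ ((α - 1) * p i) := by
    rcases (hp0 i).eq_or_lt with h | h
    · simp [← h]
    · exact rpow_pos_of_pos h _
  have key : (1 - α) * -∑ i, p i * log (p i) ≤ log (∑ i, p i ^ α) :=
    calc (1 - α) * -∑ i, p i * log (p i) = ∑ i, log (p i ^ ((α - 1) * p i)) := by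
          simp only [hlog, ← mul_sum]; ring
      _ = log (∏ i, p i ^ ((α - 1) * p i)) :=
          (log_prod fun i _ ↦ (hpos i).ne').symm
      _ ≤ log (∑ i, p i ^ α) := by
          refine log_le_log (prod_pos fun i _ ↦ hpos i) ?_
          simpa only [hfactor, hterm] using amgm
  simp only [shannonEntropy, renyiEntropy, logb, mul_div_assoc', ← sum_div, ← neg_div]
  refine div_le_div_of_nonneg_right ?_ (log_pos one_lt_two).le
  rw [one_div_mul_eq_div, le_div_iff₀ (sub_pos.2 hα1)]
  linarith

lemma exists_pos_le_one_lt_neg_logb (b k : ℝ) (hb : 1 < b) :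
    ∃ ε : ℝ, 0 < ε ∧ ε ≤ 1 ∧ k < -logb b ε := by
  refine ⟨b ^ (-(max k 0 + 1)), rpow_pos_of_pos (by linarith) _,
    rpow_le_one_of_one_le_of_nonpos hb.le (by linarith [le_max_right k 0]), ?_⟩
  rw [logb_rpow (by linarith) hb.ne', neg_neg]
  linarith [le_max_left k 0]

section Single

variable [DecidableEq ι] (a : ι)

lemma shannonEntropy_single : shannonEntropy (Pi.single a 1 : ι → ℝ) = 0 := by
  rw [shannonEntropy, Fintype.sum_eq_single a fun i hi ↦ by simp [hi]]
  simp

lemma renyiEntropy_single {α : ℝ} (hα : α ≠ 0) : renyiEntropy α (Pi.single a 1 : ι → ℝ) = 0 := by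
  rw [renyiEntropy, Fintype.sum_eq_single a fun i hi ↦ by simp [hi, zero_rpow hα]]
  simp

lemma sum_abs_smul_single_add_smul_single_sub_single {b : ι} (hab : a ≠ b) (ε : ℝ) :
    ∑ i, |((1 - ε) • Pi.single a 1 + ε • Pi.single b 1 : ι → ℝ) i - (Pi.single a 1 : ι → ℝ) i|
      = 2 * |ε| := by
  rw [Fintype.sum_eq_add a b hab fun i hi ↦ by simp [hi.1, hi.2]]
  simp [hab, hab.symm]
  ring

end Single

/-- For `0 < α ≤ 1` the α-Rényi entropy (Shannon entropy at `α = 1`) is not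
Lipschitz continuous w.r.t. total variation distance. -/
theorem stmt9 {d : ℕ} (hd : 2 ≤ d) (α : ℝ) (hα0 : 0 < α) (hα1 : α ≤ 1)
    (H : (Fin d → ℝ) → ℝ)
    (hH : ∀ p, H p = if α = 1 then -∑ i, p i * Real.logb 2 (p i)
      else (1 / (1 - α)) * Real.logb 2 (∑ i, p i ^ α)) :
    ∀ k : ℝ, ∃ p q : Fin d → ℝ,
      ((∀ i, 0 ≤ p i) ∧ ∑ i, p i = 1) ∧ ((∀ i, 0 ≤ q i) ∧ ∑ i, q i = 1) ∧
      k * ((1 / 2) * ∑ i, |p i - q i|) < |H p - H q| := by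
  intro k
  let a : Fin d := ⟨0, by omega⟩
  let b : Fin d := ⟨1, by omega⟩
  have hab : a ≠ b := by simp [a, b, Fin.ext_iff]
  obtain ⟨ε, hε0, hε1, hkε⟩ := exists_pos_le_one_lt_neg_logb 2 k one_lt_two
  set q : Fin d → ℝ := Pi.single a 1
  set p : Fin d → ℝ := (1 - ε) • q + ε • Pi.single b 1
  have hq : q ∈ stdSimplex ℝ (Fin d) := single_mem_stdSimplex ℝ a
  have hp : p ∈ stdSimplex ℝ (Fin d) := convex_stdSimplex ℝ (Fin d) hq
    (single_mem_stdSimplex ℝ b) (by linarith) hε0.le (by ring)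
  have htv : ∑ i, |p i - q i| = 2 * ε :=
    (sum_abs_smul_single_add_smul_single_sub_single a hab ε).trans (by rw [abs_of_pos hε0])
  have hHq : H q = 0 := by
    rw [hH]
    split_ifs
    exacts [shannonEntropy_single a, renyiEntropy_single a hα0.ne']
  have hHp : shannonEntropy p ≤ H p := by
    rw [hH]
    split_ifs with h
    exacts [le_rfl, shannonEntropy_le_renyiEntropy hp hα0 (lt_of_le_of_ne hα1 h)]
  refine ⟨p, q, hp, hq, ?_⟩
  rw [htv, hHq, sub_zero]
  calc k * (1 / 2 * (2 * ε)) < -logb 2 ε * ε := by nlinarith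
    _ = -(p b * logb 2 (p b)) := by simp [p, q, hab.symm, mul_comm]
    _ ≤ shannonEntropy p := neg_mul_logb_le_shannonEntropy hp b
    _ ≤ |H p| := hHp.trans (le_abs_self _)
end

section
/- Let f : [0,1] → ℝ be strictly convex with f(0) = f(1) = 0 and define S_f(p) = −Σ_i f(p_i) on the probability simplex in ℝ^d. Then for ε ∈ [0, 1 − 1/d] and probability vectors p, q with TV(p,q) ≤ ε, |S_f(p) − S_f(q)| ≤ −f(1−ε) − (d−1)·f(ε/(d−1)). -/
/-!
Write `p = c + a` and `q = c + b` with `c = min p q`, so that `∑ a = ∑ b = TV(p, q)`, and let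
`q j` be the largest coordinate of `q`. Increments of a convex `f` grow with the base point, so
moving the mass `b i` of every other coordinate onto `q j` can only increase `∑ f`. With
`x = ∑_{i ≠ j} a i`, superadditivity (from `f 0 = 0`) gives `f (c i) + f (a i) ≤ f (p i)` and
`f 1 = 0` gives `f (p j + x) + f (1 - x) ≤ f (p j)`, whence
`∑ f (q i) - ∑ f (p i) ≤ -f (1 - x) - ∑_{i ≠ j} f (a i) ≤ -f (1 - x) - (d - 1) f (x / (d - 1))`
by Jensen. The right-hand side is antitone in `x` on `[0, 1 - 1/d]` by monotonicity of slopes,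
and `x ≤ TV(p, q) ≤ ε`.
-/

open Finset

namespace ConvexOn

variable {s : Set ℝ} {f : ℝ → ℝ}

theorem slope_le_slope (hf : ConvexOn ℝ s f) {a b c e : ℝ} (ha : a ∈ s) (he : e ∈ s)
    (hab : a < b) (hce : c < e) (hac : a ≤ c) (hbe : b ≤ e) :
    (f b - f a) / (b - a) ≤ (f e - f c) / (e - c) := by
  have hmem := hf.1.ordConnected.out ha he
  calc (f b - f a) / (b - a) ≤ (f e - f a) / (e - a) :=
        hf.secant_mono ha (hmem ⟨hab.le, hbe⟩) he hab.ne' (by linarith) hbe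
    _ = (f a - f e) / (a - e) := by rw [← neg_div_neg_eq, neg_sub, neg_sub]
    _ ≤ (f c - f e) / (c - e) :=
        hf.secant_mono he ha (hmem ⟨hac, hce.le⟩) (by linarith) hce.ne hac
    _ = (f e - f c) / (e - c) := by rw [← neg_div_neg_eq, neg_sub, neg_sub]

theorem map_add_sub_map_le (hf : ConvexOn ℝ s f) {u v h : ℝ} (hu : u ∈ s) (hvh : v + h ∈ s)
    (huv : u ≤ v) (hh : 0 ≤ h) : f (u + h) - f u ≤ f (v + h) - f v := by
  rcases hh.eq_or_lt with rfl | hh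
  · simp
  have := hf.slope_le_slope hu hvh (lt_add_of_pos_right u hh) (lt_add_of_pos_right v hh) huv
    (by linarith)
  rwa [add_sub_cancel_left, add_sub_cancel_left, div_le_div_iff_of_pos_right hh] at this

theorem map_add_map_le_map_add (hf : ConvexOn ℝ s f) (h0 : 0 ∈ s) (hf0 : f 0 = 0) {x y : ℝ}
    (hx : 0 ≤ x) (hy : 0 ≤ y) (hxy : x + y ∈ s) : f x + f y ≤ f (x + y) := by
  have := hf.map_add_sub_map_le h0 hxy hx hy
  rw [zero_add, hf0] at this
  linarith

theorem sum_map_add_map_le_of_transfer {ι : Type*} (hf : ConvexOn ℝ s f) {A : Finset ι}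
    {x z : ι → ℝ} {m : ℝ} (hx : ∀ i ∈ A, x i ∈ s) (hxz : ∀ i ∈ A, x i ≤ z i)
    (hxm : ∀ i ∈ A, x i ≤ m) (hm : m + ∑ i ∈ A, (z i - x i) ∈ s) :
    ∑ i ∈ A, f (z i) + f m ≤ ∑ i ∈ A, f (x i) + f (m + ∑ i ∈ A, (z i - x i)) := by
  induction A using Finset.cons_induction with
  | empty => simp
  | cons i A hi ih =>
    simp only [mem_cons, forall_eq_or_imp] at hx hxz hxm
    have hA : 0 ≤ ∑ k ∈ A, (z k - x k) := sum_nonneg fun k hk ↦ sub_nonneg.2 (hxz.2 k hk)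
    have hsplit :
        m + ∑ k ∈ cons i A hi, (z k - x k) = m + ∑ k ∈ A, (z k - x k) + (z i - x i) := by
      rw [sum_cons]; ring
    rw [hsplit] at hm ⊢
    have hmA : m + ∑ k ∈ A, (z k - x k) ∈ s :=
      hf.1.ordConnected.out hx.1 hm ⟨by linarith [hxm.1], by linarith [hxz.1]⟩
    have hinc := hf.map_add_sub_map_le hx.1 hm (by linarith [hxm.1]) (sub_nonneg.2 hxz.1)
    rw [add_sub_cancel] at hinc
    rw [sum_cons, sum_cons]
    linarith [ih hx.2 hxz.2 hxm.2 hmA]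

theorem card_mul_map_sum_div_card_le {ι : Type*} (hf : ConvexOn ℝ s f) {A : Finset ι}
    {x : ι → ℝ} (hx : ∀ i ∈ A, x i ∈ s) :
    #A * f ((∑ i ∈ A, x i) / #A) ≤ ∑ i ∈ A, f (x i) := by
  rcases A.eq_empty_or_nonempty with rfl | hA
  · simp
  have hcard : (0 : ℝ) < #A := by exact_mod_cast hA.card_pos
  have := hf.map_sum_le (w := fun _ ↦ (#A : ℝ)⁻¹) (fun _ _ ↦ by positivity)
    (by simp [hcard.ne']) hx
  simp only [smul_eq_mul, ← mul_sum] at this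
  rw [inv_mul_eq_div] at this
  calc #A * f ((∑ i ∈ A, x i) / #A) ≤ #A * ((#A : ℝ)⁻¹ * ∑ i ∈ A, f (x i)) := by gcongr
    _ = ∑ i ∈ A, f (x i) := by field_simp

end ConvexOn

/-- `∑ f` over `(1 - x, x / (d - 1), …, x / (d - 1))`, the probability vector of length `d` at
total variation distance `x` from a point mass that attains the bound. -/
noncomputable def extremalSum (f : ℝ → ℝ) (d x : ℝ) : ℝ :=
  f (1 - x) + (d - 1) * f (x / (d - 1))

theorem antitoneOn_extremalSum {f : ℝ → ℝ} (hf : ConvexOn ℝ (Set.Icc 0 1) f) {d : ℝ}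
    (hd : 1 < d) : AntitoneOn (extremalSum f d) (Set.Icc 0 (1 - 1 / d)) := by
  rintro x ⟨hx0, -⟩ y ⟨-, hyT⟩ hxy
  rcases hxy.eq_or_lt with rfl | hxy
  · rfl
  have hd1 : 0 < d - 1 := by linarith
  have hxy' : x / (d - 1) < y / (d - 1) := div_lt_div_of_pos_right hxy hd1
  -- `y ≤ 1 - 1/d` is what puts `[x/(d-1), y/(d-1)]` to the left of `[1 - y, 1 - x]`
  have hyd : y / (d - 1) ≤ 1 - y := by
    have : y * d ≤ d - 1 :=
      calc y * d ≤ (1 - 1 / d) * d := by gcongr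
        _ = d - 1 := by field_simp
    rw [div_le_iff₀ hd1]
    linarith
  have hslope := hf.slope_le_slope (c := 1 - y) (e := 1 - x) ⟨by positivity, by linarith⟩
    ⟨by linarith [div_nonneg hx0 hd1.le], by linarith⟩ hxy' (by linarith) (by linarith)
    (by linarith)
  rw [← sub_div, div_div_eq_mul_div, show 1 - x - (1 - y) = y - x by ring,
    div_le_div_iff_of_pos_right (by linarith)] at hslope
  unfold extremalSum
  linarith

theorem sum_max_sub_zero_eq_half_sum_abs {ι : Type*} (A : Finset ι) {p q : ι → ℝ}
    (h : ∑ i ∈ A, p i = ∑ i ∈ A, q i) :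
    ∑ i ∈ A, max (p i - q i) 0 = (1 / 2) * ∑ i ∈ A, |p i - q i| := by
  have hpos_neg : ∑ i ∈ A, max (p i - q i) 0 - ∑ i ∈ A, max (-(p i - q i)) 0 = 0 := by
    rw [← sum_sub_distrib]
    simp only [max_zero_sub_max_neg_zero_eq_self]
    rw [sum_sub_distrib, h, sub_self]
  simp only [← max_zero_add_max_neg_zero_eq_abs_self, sum_add_distrib]
  linarith

theorem sum_erase_map_sub_add_map_le {ι : Type*} [Fintype ι] [DecidableEq ι] {f : ℝ → ℝ}
    (hf : ConvexOn ℝ (Set.Icc 0 1) f) (hf0 : f 0 = 0) (hf1 : f 1 = 0) {p a : ι → ℝ} (j : ι)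
    (ha0 : ∀ i, 0 ≤ a i) (hap : ∀ i, a i ≤ p i) (hp1 : ∀ i, p i ≤ 1)
    (hpj : p j + ∑ i ∈ univ.erase j, a i ≤ 1) :
    ∑ i ∈ univ.erase j, f (p i - a i) + f (p j + ∑ i ∈ univ.erase j, a i) ≤
      ∑ i, f (p i) - extremalSum f (Fintype.card ι) (∑ i ∈ univ.erase j, a i) := by
  set x := ∑ i ∈ univ.erase j, a i
  have hx0 : 0 ≤ x := sum_nonneg fun i _ ↦ ha0 i
  have hsplit : ∀ i, f (p i - a i) + f (a i) ≤ f (p i) := fun i ↦ by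
    simpa using hf.map_add_map_le_map_add ⟨le_rfl, zero_le_one⟩ hf0 (sub_nonneg.2 (hap i))
      (ha0 i) (by simpa using ⟨(ha0 i).trans (hap i), hp1 i⟩)
  have hpeak : f (p j + x) + f (1 - x) ≤ f (p j) := by
    have := hf.map_add_sub_map_le (u := p j) (v := 1 - x) (h := x)
      ⟨(ha0 j).trans (hap j), hp1 j⟩ (by simp) (by linarith) hx0
    rw [sub_add_cancel, hf1] at this
    linarith
  have hjensen : (Fintype.card ι - 1 : ℝ) * f (x / (Fintype.card ι - 1)) ≤
      ∑ i ∈ univ.erase j, f (a i) := by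
    have := hf.card_mul_map_sum_div_card_le (A := univ.erase j) (x := a)
      fun i _ ↦ ⟨ha0 i, (hap i).trans (hp1 i)⟩
    rwa [card_erase_of_mem (mem_univ j), card_univ,
      Nat.cast_sub (Fintype.card_pos_iff.2 ⟨j⟩), Nat.cast_one] at this
  have hp := sum_erase_add univ (fun i ↦ f (p i)) (mem_univ j)
  have hsum := sum_le_sum fun i (_ : i ∈ univ.erase j) ↦ hsplit i
  rw [sum_add_distrib] at hsum
  unfold extremalSum
  linarith

theorem exists_sum_map_sub_sum_map_le {ι : Type*} [Fintype ι] {f : ℝ → ℝ}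
    (hf : ConvexOn ℝ (Set.Icc 0 1) f) (hf0 : f 0 = 0) (hf1 : f 1 = 0) {p q : ι → ℝ}
    (hp0 : ∀ i, 0 ≤ p i) (hp1 : ∑ i, p i = 1) (hq0 : ∀ i, 0 ≤ q i) (hq1 : ∑ i, q i = 1) :
    ∃ x, 0 ≤ x ∧ x ≤ (1 / 2) * ∑ i, |p i - q i| ∧
      ∑ i, f (q i) - ∑ i, f (p i) ≤ -extremalSum f (Fintype.card ι) x := by
  classical
  have : Nonempty ι := by
    by_contra h
    simp [not_nonempty_iff.1 h] at hq1
  obtain ⟨j, -, hj⟩ := exists_max_image univ q univ_nonempty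
  set a : ι → ℝ := fun i ↦ max (p i - q i) 0
  set x := ∑ i ∈ univ.erase j, a i
  have ha0 : ∀ i, 0 ≤ a i := fun i ↦ le_max_right _ _
  have hap : ∀ i, a i ≤ p i := fun i ↦ max_le (by linarith [hq0 i]) (hp0 i)
  have hcq : ∀ i, p i - a i ≤ q i := fun i ↦ by linarith [le_max_left (p i - q i) 0]
  have hp_le : ∀ i, p i ≤ 1 := fun i ↦ hp1 ▸ single_le_sum (fun k _ ↦ hp0 k) (mem_univ i)
  have hq := sum_erase_add univ q (mem_univ j)
  have hmass : q j + ∑ i ∈ univ.erase j, (q i - (p i - a i)) = p j + x := by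
    have hp := sum_erase_add univ p (mem_univ j)
    simp only [sub_sub_eq_add_sub, add_sub_right_comm _ (a _), sum_add_distrib, sum_sub_distrib]
    linarith
  have hpeak_le : p j + x ≤ 1 := by
    have := sum_le_sum fun i (_ : i ∈ univ.erase j) ↦ sub_le_self (q i) (sub_nonneg.2 (hap i))
    linarith
  have hx0 : 0 ≤ x := sum_nonneg fun i _ ↦ ha0 i
  refine ⟨x, hx0, ?_, ?_⟩
  · calc x ≤ ∑ i, a i := sum_le_sum_of_subset_of_nonneg (subset_univ _) fun i _ _ ↦ ha0 i
      _ = _ := sum_max_sub_zero_eq_half_sum_abs univ (hp1.trans hq1.symm)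
  have htransfer : ∑ i, f (q i) ≤ ∑ i ∈ univ.erase j, f (p i - a i) + f (p j + x) := by
    have := hf.sum_map_add_map_le_of_transfer (A := univ.erase j) (m := q j)
      (fun i _ ↦ ⟨sub_nonneg.2 (hap i), (sub_le_self _ (ha0 i)).trans (hp_le i)⟩)
      (fun i _ ↦ hcq i) (fun i _ ↦ (hcq i).trans (hj i (mem_univ i)))
      (hmass ▸ ⟨add_nonneg (hp0 j) hx0, hpeak_le⟩)
    rwa [hmass, sum_erase_add univ _ (mem_univ j)] at this
  linarith [sum_erase_map_sub_add_map_le hf hf0 hf1 j ha0 hap hp_le hpeak_le]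

theorem sum_map_sub_sum_map_le_extremalSum {ι : Type*} [Fintype ι] {f : ℝ → ℝ}
    (hf : ConvexOn ℝ (Set.Icc 0 1) f) (hf0 : f 0 = 0) (hf1 : f 1 = 0) {p q : ι → ℝ}
    (hp0 : ∀ i, 0 ≤ p i) (hp1 : ∑ i, p i = 1) (hq0 : ∀ i, 0 ≤ q i) (hq1 : ∑ i, q i = 1)
    (hι : 1 < (Fintype.card ι : ℝ)) {ε : ℝ} (hTV : (1 / 2) * ∑ i, |p i - q i| ≤ ε)
    (hε : ε ≤ 1 - 1 / Fintype.card ι) :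
    ∑ i, f (q i) - ∑ i, f (p i) ≤ -extremalSum f (Fintype.card ι) ε := by
  obtain ⟨x, hx0, hxTV, hbound⟩ :=
    exists_sum_map_sub_sum_map_le hf hf0 hf1 hp0 hp1 hq0 hq1
  have hxε := hxTV.trans hTV
  have := antitoneOn_extremalSum hf hι ⟨hx0, hxε.trans hε⟩ ⟨hx0.trans hxε, hε⟩ hxε
  linarith

theorem stmt14_general {d : ℕ} (hd : 2 ≤ d) (f : ℝ → ℝ)
    (hf : StrictConvexOn ℝ (Set.Icc (0 : ℝ) 1) f) (hf0 : f 0 = 0) (hf1 : f 1 = 0)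
    (S : (Fin d → ℝ) → ℝ) (hS : ∀ p, S p = -∑ i, f (p i))
    (ε : ℝ) (hε1 : ε ≤ 1 - 1 / d)
    (p q : Fin d → ℝ)
    (hp : (∀ i, 0 ≤ p i) ∧ ∑ i, p i = 1) (hq : (∀ i, 0 ≤ q i) ∧ ∑ i, q i = 1)
    (hTV : (1 / 2) * ∑ i, |p i - q i| ≤ ε) :
    |S p - S q| ≤ -f (1 - ε) - ((d : ℝ) - 1) * f (ε / ((d : ℝ) - 1)) := by
  have hd' : (1 : ℝ) < Fintype.card (Fin d) := by rw [Fintype.card_fin]; exact_mod_cast hd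
  have hε : ε ≤ 1 - 1 / (Fintype.card (Fin d) : ℝ) := by rwa [Fintype.card_fin]
  have hpq := sum_map_sub_sum_map_le_extremalSum hf.convexOn hf0 hf1 hp.1 hp.2 hq.1 hq.2 hd'
    hTV hε
  have hqp := sum_map_sub_sum_map_le_extremalSum hf.convexOn hf0 hf1 hq.1 hq.2 hp.1 hp.2 hd'
    (by simpa only [abs_sub_comm] using hTV) hε
  rw [extremalSum, Fintype.card_fin] at hpq hqp
  rw [hS, hS, abs_le]
  constructor <;> linarith

/-- Uniform continuity bound for the entropy `S_f(p) = -∑ f(pᵢ)` induced by a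
strictly convex `f : [0,1] → ℝ` with `f(0) = f(1) = 0`. -/
theorem stmt14 {d : ℕ} (hd : 2 ≤ d) (f : ℝ → ℝ)
    (hf : StrictConvexOn ℝ (Set.Icc (0 : ℝ) 1) f) (hf0 : f 0 = 0) (hf1 : f 1 = 0)
    (S : (Fin d → ℝ) → ℝ) (hS : ∀ p, S p = -∑ i, f (p i))
    (ε : ℝ) (hε0 : 0 ≤ ε) (hε1 : ε ≤ 1 - 1 / d)
    (p q : Fin d → ℝ)
    (hp : (∀ i, 0 ≤ p i) ∧ ∑ i, p i = 1) (hq : (∀ i, 0 ≤ q i) ∧ ∑ i, q i = 1)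
    (hTV : (1 / 2) * ∑ i, |p i - q i| ≤ ε) :
    |S p - S q| ≤ -f (1 - ε) - ((d : ℝ) - 1) * f (ε / ((d : ℝ) - 1)) :=
  stmt14_general hd f hf hf0 hf1 S hS ε hε1 p q hp hq hTV
end

section
/- For bipartite pure states the concurrence, viewed as C(ρ) = √(2(1 − tr ρ²)) of the reduced density matrix ρ, satisfies: for density matrices ρ, σ on a d-dimensional Hilbert space with trace distance (1/2)‖ρ−σ‖₁ ≤ ε ≤ 1 − 1/d, |C(ρ) − C(σ)| ≤ √(2(1 − (1−ε)² − ε²/(d−1))). -/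
/-!
In an eigenbasis of `ρ - σ` the two states have the same off-diagonal entries, so
`tr ρ² - tr σ² = ∑ pᵢ² - ∑ qᵢ²` for their diagonals `p`, `q`: probability vectors with
`½‖p - q‖₁` equal to the trace distance `t`. The coordinates where `p` exceeds `q` contribute
at most `2t - t²` to `∑ pᵢ² - ∑ qᵢ²`, and the others, at most `d - 1` of them, at most
`-t² / (d - 1)` by Cauchy–Schwarz; the resulting bound increases in `t` up to `1 - 1/d`.
Finally `√` is ½-Hölder: `|√a - √b| ≤ √|a - b|`.
-/

open Finset Real Matrix
open scoped ComplexOrder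

theorem Real.abs_sqrt_sub_sqrt_le (a b : ℝ) : |√a - √b| ≤ √|a - b| := by
  wlog hba : b ≤ a generalizing a b
  · rw [abs_sub_comm, abs_sub_comm a]
    exact this b a (le_of_not_ge hba)
  rw [abs_of_nonneg (sub_nonneg.2 (Real.sqrt_le_sqrt hba)), abs_of_nonneg (sub_nonneg.2 hba),
    sub_le_iff_le_add, Real.sqrt_le_iff]
  have hb : b ≤ √b ^ 2 := by
    rcases le_total 0 b with h | h
    · rw [Real.sq_sqrt h]
    · exact h.trans (sq_nonneg _)
  refine ⟨by positivity, ?_⟩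
  nlinarith [Real.sq_sqrt (sub_nonneg.2 hba), Real.sqrt_nonneg b, Real.sqrt_nonneg (a - b)]

theorem sq_sum_le_card_sub_one_mul_sum_sq {ι : Type*} [Fintype ι] [DecidableEq ι]
    {v : ι → ℝ} {j : ι} (hj : v j = 0) :
    (∑ i, v i) ^ 2 ≤ (Fintype.card ι - 1 : ℝ) * ∑ i, v i ^ 2 := by
  have h := sq_sum_le_card_mul_sum_sq (s := univ.erase j) (f := v)
  rwa [sum_erase _ hj, sum_erase _ (by simp [hj]), card_erase_of_mem (mem_univ j), card_univ,
    Nat.cast_sub (Fintype.card_pos_iff.2 ⟨j⟩), Nat.cast_one] at h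

theorem sq_sub_sq_le_of_posPart_le {p q t : ℝ} (hp : 0 ≤ p) (hq : 0 ≤ q) (ht : (p - q)⁺ ≤ t) :
    p ^ 2 - q ^ 2 ≤ t * (2 * p - (p - q)⁺) - (p - q)⁻ ^ 2 := by
  rcases le_total q p with h | h
  · rw [posPart_eq_self.2 (sub_nonneg.2 h), negPart_eq_zero.2 (sub_nonneg.2 h)] at *
    nlinarith
  · rw [posPart_eq_zero.2 (sub_nonpos.2 h), negPart_eq_neg.2 (sub_nonpos.2 h)] at *
    nlinarith

theorem Matrix.trace_mul_self_sub_trace_mul_self_of_isDiag {n R : Type*} [Fintype n]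
    [DecidableEq n] [CommRing R] {A B : Matrix n n R} (h : (A - B).IsDiag) :
    (A * A).trace - (B * B).trace = ∑ i, (A i i ^ 2 - B i i ^ 2) := by
  have hfactor : (A * A).trace - (B * B).trace = ((A - B) * (A + B)).trace := by
    rw [sub_mul, mul_add, mul_add, trace_sub, trace_add, trace_add, trace_mul_comm B A]
    ring
  rw [hfactor, ← h.diagonal_diag, trace]
  refine sum_congr rfl fun i _ => ?_
  simp only [diag_sub, diag_apply, diagonal_mul, Pi.sub_apply, add_apply]
  ring

theorem Matrix.trace_conjStarAlgAut {n R : Type*} [Fintype n] [DecidableEq n] [CommRing R]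
    [StarRing R] (u : unitary (Matrix n n R)) (A : Matrix n n R) :
    (Unitary.conjStarAlgAut R _ u A).trace = A.trace := by
  rw [Unitary.conjStarAlgAut_apply, trace_mul_cycle, Unitary.star_mul_self_of_mem u.2, one_mul]

theorem Matrix.PosSemidef.conjStarAlgAut {n 𝕜 : Type*} [Fintype n] [DecidableEq n] [RCLike 𝕜]
    {A : Matrix n n 𝕜} (hA : A.PosSemidef) (u : unitary (Matrix n n 𝕜)) :
    (Unitary.conjStarAlgAut 𝕜 _ u A).PosSemidef := by
  rw [Unitary.conjStarAlgAut_apply, star_eq_conjTranspose]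
  exact hA.mul_mul_conjTranspose_same _

/-- `1 - ∑ rᵢ²` for the probability vector `r = (1 - ε, ε / (n - 1), …, ε / (n - 1))`. -/
noncomputable def purityGapBound (n ε : ℝ) : ℝ := 1 - (1 - ε) ^ 2 - ε ^ 2 / (n - 1)

theorem monotoneOn_purityGapBound {n : ℝ} (hn : 1 < n) :
    MonotoneOn (purityGapBound n) (Set.Iic (1 - 1 / n)) := by
  intro t ht ε hε htε
  have hn1 : 0 < n - 1 := sub_pos.2 hn
  have hsum : (t + ε) * n ≤ 2 * (n - 1) := by
    have hle := add_le_add (Set.mem_Iic.1 ht) (Set.mem_Iic.1 hε)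
    have hmul : (1 - 1 / n + (1 - 1 / n)) * n = 2 * (n - 1) := by field_simp; ring
    nlinarith
  have key : purityGapBound n ε - purityGapBound n t =
      (ε - t) * (2 * (n - 1) - (t + ε) * n) / (n - 1) := by
    unfold purityGapBound
    field_simp
    ring
  rw [← sub_nonneg, key]
  exact div_nonneg (mul_nonneg (sub_nonneg.2 htε) (sub_nonneg.2 hsum)) hn1.le

theorem sum_sq_sub_sum_sq_le {ι : Type*} [Fintype ι] [DecidableEq ι] {p q : ι → ℝ}
    (hp : ∀ i, 0 ≤ p i) (hq : ∀ i, 0 ≤ q i) (hp1 : ∑ i, p i = 1) (hq1 : ∑ i, q i = 1) :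
    ∑ i, p i ^ 2 - ∑ i, q i ^ 2 ≤
      purityGapBound (Fintype.card ι) ((1 / 2) * ∑ i, |p i - q i|) := by
  set t := (1 / 2) * ∑ i, |p i - q i|
  set u := fun i => (p i - q i)⁺
  set v := fun i => (p i - q i)⁻
  have hu_sub_v : ∑ i, u i - ∑ i, v i = 0 := by
    rw [← sum_sub_distrib]
    simp only [u, v, posPart_sub_negPart]
    rw [sum_sub_distrib, hp1, hq1, sub_self]
  have hu_add_v : ∑ i, u i + ∑ i, v i = 2 * t := by
    simp only [u, v, t, ← sum_add_distrib, posPart_add_negPart]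
    ring
  have hu : ∑ i, u i = t := by linarith
  have hv : ∑ i, v i = t := by linarith
  have hut : ∀ i, u i ≤ t := fun i =>
    hu ▸ single_le_sum (fun j _ => posPart_nonneg (p j - q j)) (mem_univ i)
  have hgain : ∑ i, p i ^ 2 - ∑ i, q i ^ 2 ≤ t * (2 - t) - ∑ i, v i ^ 2 := by
    calc ∑ i, p i ^ 2 - ∑ i, q i ^ 2 = ∑ i, (p i ^ 2 - q i ^ 2) := (sum_sub_distrib ..).symm
      _ ≤ ∑ i, (t * (2 * p i - u i) - v i ^ 2) :=
          sum_le_sum fun i _ => sq_sub_sq_le_of_posPart_le (hp i) (hq i) (hut i)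
      _ = t * (2 - t) - ∑ i, v i ^ 2 := by
          rw [sum_sub_distrib, ← mul_sum, sum_sub_distrib, ← mul_sum, hp1, hu]
          ring
  -- `v` vanishes wherever `u` does not, so its mass `t` sits on at most `card ι - 1` coordinates.
  have hloss : t ^ 2 / (Fintype.card ι - 1) ≤ ∑ i, v i ^ 2 := by
    obtain ⟨j, hj⟩ | ht0 : (∃ j, u j ≠ 0) ∨ t = 0 := by
      by_contra! h
      exact h.2 (hu ▸ sum_eq_zero fun i _ => h.1 i)
    · have hvj : v j = 0 := negPart_eq_zero.2 (not_le.1 (mt posPart_eq_zero.2 hj)).le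
      have hcard : (0 : ℝ) ≤ Fintype.card ι - 1 :=
        sub_nonneg.2 (Nat.one_le_cast.2 (Fintype.card_pos_iff.2 ⟨j⟩))
      refine div_le_of_le_mul₀ hcard (sum_nonneg fun i _ => sq_nonneg _) ?_
      rw [← hv, mul_comm]
      exact sq_sum_le_card_sub_one_mul_sum_sq hvj
    · rw [ht0, zero_pow two_ne_zero, zero_div]
      exact sum_nonneg fun i _ => sq_nonneg _
  unfold purityGapBound
  linarith

theorem abs_sum_sq_sub_sum_sq_le {ι : Type*} [Fintype ι] [DecidableEq ι] {p q : ι → ℝ}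
    (hp : ∀ i, 0 ≤ p i) (hq : ∀ i, 0 ≤ q i) (hp1 : ∑ i, p i = 1) (hq1 : ∑ i, q i = 1) :
    |∑ i, p i ^ 2 - ∑ i, q i ^ 2| ≤
      purityGapBound (Fintype.card ι) ((1 / 2) * ∑ i, |p i - q i|) := by
  refine abs_sub_le_iff.2 ⟨sum_sq_sub_sum_sq_le hp hq hp1 hq1, ?_⟩
  simpa only [abs_sub_comm (q _)] using sum_sq_sub_sum_sq_le hq hp hq1 hp1

theorem Matrix.PosSemidef.exists_diagonals_in_eigenbasis_of_sub {n : Type*} [Fintype n]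
    [DecidableEq n]
    {ρ σ : Matrix n n ℂ} (hρ : ρ.PosSemidef) (hσ : σ.PosSemidef)
    (hρtr : ρ.trace = 1) (hσtr : σ.trace = 1) :
    ∃ p q : n → ℝ, (∀ i, 0 ≤ p i) ∧ (∀ i, 0 ≤ q i) ∧ ∑ i, p i = 1 ∧ ∑ i, q i = 1 ∧
      (∀ i, p i - q i = (hρ.1.sub hσ.1).eigenvalues i) ∧
      ((ρ * ρ).trace).re - ((σ * σ).trace).re = ∑ i, (p i ^ 2 - q i ^ 2) := by
  set u := star (hρ.1.sub hσ.1).eigenvectorUnitary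
  set Φ := Unitary.conjStarAlgAut ℂ (Matrix n n ℂ) u
  have hΦ : Φ ρ - Φ σ = diagonal (RCLike.ofReal ∘ (hρ.1.sub hσ.1).eigenvalues) := by
    rw [← map_sub]
    exact (hρ.1.sub hσ.1).conjStarAlgAut_star_eigenvectorUnitary
  have hρ' := hρ.conjStarAlgAut u
  have hσ' := hσ.conjStarAlgAut u
  have hsum_re_diag : ∀ M : Matrix n n ℂ, M.trace = 1 → ∑ i, (Φ M i i).re = 1 := fun M hM => by
    simpa only [trace, diag, Complex.re_sum, Complex.one_re] using
      congrArg Complex.re ((trace_conjStarAlgAut u M).trans hM)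
  refine ⟨fun i => (Φ ρ i i).re, fun i => (Φ σ i i).re, fun i => ?_, fun i => ?_,
    hsum_re_diag ρ hρtr, hsum_re_diag σ hσtr, fun i => ?_, ?_⟩
  · exact (Complex.nonneg_iff.1 hρ'.diag_nonneg).1
  · exact (Complex.nonneg_iff.1 hσ'.diag_nonneg).1
  · simpa using congrArg Complex.re (congrFun (congrFun hΦ i) i)
  · rw [← Complex.sub_re, ← trace_conjStarAlgAut u (ρ * ρ), ← trace_conjStarAlgAut u (σ * σ),
      map_mul Φ, map_mul Φ, trace_mul_self_sub_trace_mul_self_of_isDiag (hΦ ▸ isDiag_diagonal _),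
      Complex.re_sum]
    refine sum_congr rfl fun i _ => ?_
    rw [← hρ'.1.coe_re_apply_self i, ← hσ'.1.coe_re_apply_self i]
    norm_cast

theorem stmt15_general {d : ℕ} (hd : 2 ≤ d) (ρ σ : Matrix (Fin d) (Fin d) ℂ)
    (hρ : ρ.PosSemidef) (hσ : σ.PosSemidef)
    (hρtr : ρ.trace = 1) (hσtr : σ.trace = 1)
    (C : Matrix (Fin d) (Fin d) ℂ → ℝ)
    (hC : ∀ X, C X = Real.sqrt (2 * (1 - ((X * X).trace).re)))
    (ε : ℝ) (hε1 : ε ≤ 1 - 1 / d)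
    (hTD : (1 / 2) * ∑ i, |(hρ.1.sub hσ.1).eigenvalues i| ≤ ε) :
    |C ρ - C σ| ≤ Real.sqrt (2 * (1 - (1 - ε) ^ 2 - ε ^ 2 / ((d : ℝ) - 1))) := by
  obtain ⟨p, q, hp, hq, hp1, hq1, hpq, hpurity⟩ :=
    hρ.exists_diagonals_in_eigenbasis_of_sub hσ hρtr hσtr
  have hdist : (1 / 2) * ∑ i, |p i - q i| ≤ ε := by simpa only [hpq] using hTD
  have hgap : |((ρ * ρ).trace).re - ((σ * σ).trace).re| ≤ purityGapBound d ε := by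
    rw [hpurity, sum_sub_distrib]
    refine (abs_sum_sq_sub_sum_sq_le hp hq hp1 hq1).trans ?_
    rw [Fintype.card_fin]
    exact monotoneOn_purityGapBound (by exact_mod_cast hd) (hdist.trans hε1) hε1 hdist
  rw [hC, hC]
  refine (Real.abs_sqrt_sub_sqrt_le _ _).trans (Real.sqrt_le_sqrt ?_)
  rw [← mul_sub, sub_sub_sub_cancel_left, abs_mul, abs_two, abs_sub_comm]
  exact mul_le_mul_of_nonneg_left hgap zero_le_two

/-- Continuity bound for the concurrence `C(ρ) = √(2(1 - tr ρ²))` of density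
matrices, in trace distance (expressed via eigenvalues of `ρ - σ`). -/
theorem stmt15 {d : ℕ} (hd : 2 ≤ d) (ρ σ : Matrix (Fin d) (Fin d) ℂ)
    (hρ : ρ.PosSemidef) (hσ : σ.PosSemidef)
    (hρtr : ρ.trace = 1) (hσtr : σ.trace = 1)
    (C : Matrix (Fin d) (Fin d) ℂ → ℝ)
    (hC : ∀ X, C X = Real.sqrt (2 * (1 - ((X * X).trace).re)))
    (ε : ℝ) (hε0 : 0 ≤ ε) (hε1 : ε ≤ 1 - 1 / d)
    (hTD : (1 / 2) * ∑ i, |(hρ.1.sub hσ.1).eigenvalues i| ≤ ε) :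
    |C ρ - C σ| ≤ Real.sqrt (2 * (1 - (1 - ε) ^ 2 - ε ^ 2 / ((d : ℝ) - 1))) :=
  stmt15_general hd ρ σ hρ hσ hρtr hσtr C hC ε hε1 hTD
end

section
/- For d ≥ 3 and x = 0, y = (d−2)^{−(α−1)/α}, z = (1−y)/(d−2) with α > 1, the probability vector r = (0, z, ..., z, y) satisfies Γ_{H_α}(r) ≥ (α/(α−1))·(d−2)^{1−1/α}/(2 ln 2), where Γ_{H_α}(r) = (α/(α−1))·(1/ln 2)·(r_+^{α−1} − r_−^{α−1})/(Σ_i r_i^α) with r_+ = y the largest and r_− = 0 the smallest entry. Consequently any Lipschitz constant of H_α with respect to TV distance is at least (α/(α−1))·(d−2)^{1−1/α}/(2 ln 2). -/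
/-!
The choice of `y` makes `y ^ α = (d - 2) ^ (1 - α)`, which dominates the mass
`(d - 2) * z ^ α` of the middle entries, so `∑ i, r i ^ α ≤ 2 * y ^ α`; together with
`1 / y = (d - 2) ^ (1 - 1 / α)` this gives the bound on `Γ`. For the Lipschitz bound, move mass `ε` from the largest entry `y` to
the zero entry: this gives probability vectors at total variation distance `ε` from `r`, and the
derivative of `H_α` along this path at `ε = 0` is exactly `Γ`, so every Lipschitz constant is at
least `Γ`.
-/

open Finset Real Filter Topology

def threePoint {M : Type*} (d : ℕ) (a b c : M) : Fin d → M :=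
  fun i => if (i : ℕ) = 0 then a else if (i : ℕ) = d - 1 then b else c

section ThreePoint

variable {M N : Type*} {d : ℕ}

lemma apply_threePoint (f : M → N) (a b c : M) (i : Fin d) :
    f (threePoint d a b c i) = threePoint d (f a) (f b) (f c) i := by
  unfold threePoint; split_ifs <;> rfl

lemma threePoint_sub_threePoint [Sub M] (a b c a' b' c' : M) (i : Fin d) :
    threePoint d a b c i - threePoint d a' b' c' i =
      threePoint d (a - a') (b - b') (c - c') i := by
  unfold threePoint; split_ifs <;> rfl

lemma threePoint_nonneg [Zero M] [LE M] {a b c : M} (ha : 0 ≤ a) (hb : 0 ≤ b) (hc : 0 ≤ c)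
    (i : Fin d) : 0 ≤ threePoint d a b c i := by
  unfold threePoint; split_ifs <;> assumption

lemma sum_threePoint {R : Type*} [CommRing R] (hd : 2 ≤ d) (a b c : R) :
    ∑ i, threePoint d a b c i = a + b + ((d : R) - 2) * c := by
  obtain ⟨n, rfl⟩ : ∃ n, d = n + 2 := ⟨d - 2, by omega⟩
  have hfirst : threePoint (n + 2) a b c 0 = a := if_pos rfl
  have hlast : threePoint (n + 2) a b c (Fin.last n).succ = b := by simp [threePoint]
  have hmid (i : Fin n) : threePoint (n + 2) a b c i.castSucc.succ = c := by
    simp [threePoint, i.isLt.ne]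
  rw [Fin.sum_univ_succ, Fin.sum_univ_castSucc, sum_congr rfl fun i _ => hmid i, hfirst, hlast,
    sum_const, card_univ, Fintype.card_fin, nsmul_eq_mul]
  push_cast
  ring

end ThreePoint

lemma HasDerivAt.le_of_eventually_sub_le {f : ℝ → ℝ} {f' x k : ℝ} (hf : HasDerivAt f f' x)
    (h : ∀ᶠ t in 𝓝[>] 0, f (x + t) - f x ≤ k * t) : f' ≤ k := by
  refine le_of_tendsto hf.tendsto_slope_zero_right ?_
  filter_upwards [h, self_mem_nhdsWithin] with t ht (htpos : 0 < t)
  rw [smul_eq_mul, inv_mul_le_iff₀ htpos, mul_comm]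
  exact ht

section Exponents

variable {α c : ℝ}

lemma rpow_neg_sub_one_div_rpow (hc : 0 ≤ c) (hα : α ≠ 0) :
    (c ^ (-((α - 1) / α))) ^ α = c ^ (1 - α) := by
  rw [← rpow_mul hc]; congr 1; field_simp; ring

lemma rpow_one_sub_inv (hc : 0 ≤ c) (hα : α ≠ 0) :
    c ^ (1 - 1 / α) = (c ^ (-((α - 1) / α)))⁻¹ := by
  rw [← rpow_neg hc, neg_neg]; congr 1; field_simp

lemma rpow_neg_sub_one_div_le_one (hα : 1 ≤ α) (hc : 1 ≤ c) : c ^ (-((α - 1) / α)) ≤ 1 :=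
  rpow_le_one_of_one_le_of_nonpos hc (neg_nonpos.mpr (div_nonneg (by linarith) (by linarith)))

lemma mul_div_rpow_le_rpow_one_sub {x : ℝ} (hα : 0 ≤ α) (hc : 0 < c) (hx0 : 0 ≤ x)
    (hx1 : x ≤ 1) : c * (x / c) ^ α ≤ c ^ (1 - α) := by
  calc c * (x / c) ^ α = x ^ α * c ^ (1 - α) := by
        rw [div_rpow hx0 hc.le, rpow_sub hc, rpow_one]; field_simp
    _ ≤ c ^ (1 - α) := mul_le_of_le_one_left (by positivity) (rpow_le_one hx0 hx1 hα)

end Exponents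

section Renyi

variable {α : ℝ}

lemma hasDerivAt_renyi_transfer (hα : 1 < α) {y A : ℝ} (hy : 0 < y) (hA : 0 ≤ A) :
    HasDerivAt (fun ε => 1 / (1 - α) * logb 2 (ε ^ α + (y - ε) ^ α + A))
      (α / (α - 1) * (1 / log 2) * (y ^ (α - 1) / (y ^ α + A))) 0 := by
  have hpow (x : ℝ) : HasDerivAt (fun t : ℝ => t ^ α) (α * x ^ (α - 1)) x :=
    hasDerivAt_rpow_const (Or.inr hα.le)
  have hsum : HasDerivAt (fun ε => ε ^ α + (y - ε) ^ α + A)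
      (α * 0 ^ (α - 1) + α * y ^ (α - 1) * -1) 0 := by
    simpa using ((hpow 0).add ((hpow (y - 0)).comp 0 ((hasDerivAt_id 0).const_sub y))).add_const A
  have hS : (0 : ℝ) ^ α + (y - 0) ^ α + A ≠ 0 := by
    rw [zero_rpow (by linarith), sub_zero]; positivity
  refine (((hsum.log hS).div_const (log 2)).const_mul (1 / (1 - α))).congr_deriv ?_
  rw [zero_rpow (by linarith), zero_rpow (by linarith), sub_zero]
  have h1α : 1 - α ≠ 0 := by linarith
  have hα1 : α - 1 ≠ 0 := by linarith
  field_simp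
  ring

lemma renyi_transfer_rate_le_of_lipschitz (hα : 1 < α) {d : ℕ} (hd : 2 ≤ d) {y z : ℝ}
    (hy : 0 < y) (hz : 0 ≤ z) (hyz : y + ((d : ℝ) - 2) * z = 1)
    (H : (Fin d → ℝ) → ℝ) (hH : ∀ p, H p = 1 / (1 - α) * logb 2 (∑ i, p i ^ α)) (k : ℝ)
    (hk : ∀ p q : Fin d → ℝ,
        ((∀ i, 0 ≤ p i) ∧ ∑ i, p i = 1) → ((∀ i, 0 ≤ q i) ∧ ∑ i, q i = 1) →
        |H p - H q| ≤ k * ((1 / 2) * ∑ i, |p i - q i|)) :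
    α / (α - 1) * (1 / log 2) * (y ^ (α - 1) / (y ^ α + ((d : ℝ) - 2) * z ^ α)) ≤ k := by
  have hd' : (2 : ℝ) ≤ d := by exact_mod_cast hd
  have hA : 0 ≤ ((d : ℝ) - 2) * z ^ α := mul_nonneg (by linarith) (rpow_nonneg hz _)
  have hprob {a b : ℝ} (ha : 0 ≤ a) (hb : 0 ≤ b) (hab : a + b = y) :
      (∀ i, 0 ≤ threePoint d a b z i) ∧ ∑ i, threePoint d a b z i = 1 :=
    ⟨threePoint_nonneg ha hb hz, by rw [sum_threePoint hd, hab, hyz]⟩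
  have hH3 (a b : ℝ) : H (threePoint d a b z) =
      1 / (1 - α) * logb 2 (a ^ α + b ^ α + ((d : ℝ) - 2) * z ^ α) := by
    simp only [hH, apply_threePoint (· ^ α), sum_threePoint hd]
  refine (hasDerivAt_renyi_transfer hα hy hA).le_of_eventually_sub_le ?_
  filter_upwards [Ioo_mem_nhdsGT hy] with ε ⟨hε, hεy⟩
  have htv : (1 / 2) * ∑ i, |threePoint d ε (y - ε) z i - threePoint d 0 y z i| = ε := by
    simp only [threePoint_sub_threePoint, apply_threePoint abs, sum_threePoint hd]
    rw [sub_zero, sub_sub_cancel_left, abs_neg, sub_self, abs_zero, abs_of_pos hε]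
    ring
  have hLip := (le_abs_self _).trans
    (hk _ _ (hprob (b := y - ε) hε.le (by linarith) (by ring)) (hprob le_rfl hy.le (zero_add y)))
  rw [htv, hH3, hH3] at hLip
  simpa only [zero_add, sub_zero] using hLip

lemma inv_div_two_le_rpow_sub_one_div {y A : ℝ} (hy : 0 < y) (hA : 0 ≤ A) (hAy : A ≤ y ^ α) :
    y⁻¹ / 2 ≤ y ^ (α - 1) / (y ^ α + A) := by
  have hyα : 0 < y ^ α := rpow_pos_of_pos hy α
  rw [rpow_sub_one hy.ne', div_div, div_le_div_iff₀ (by positivity) (by positivity)]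
  calc y⁻¹ * (y * (y ^ α + A)) = y ^ α + A := by field_simp
    _ ≤ y ^ α * 2 := by linarith

lemma le_renyi_transfer_rate (hα : 1 < α) {c y z : ℝ} (hc : 1 ≤ c)
    (hy : y = c ^ (-((α - 1) / α))) (hz : z = (1 - y) / c) :
    α / (α - 1) * c ^ (1 - 1 / α) / (2 * log 2) ≤
      α / (α - 1) * (1 / log 2) * (y ^ (α - 1) / (y ^ α + c * z ^ α)) := by
  have hc0 : 0 < c := by linarith
  have hα0 : α ≠ 0 := by linarith
  have hα1 : 0 < α - 1 := by linarith
  have hy0 : 0 < y := hy ▸ rpow_pos_of_pos hc0 _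
  have hy1 : y ≤ 1 := hy ▸ rpow_neg_sub_one_div_le_one hα.le hc
  have hz0 : 0 ≤ z := hz ▸ div_nonneg (by linarith) hc0.le
  have hmid : c * z ^ α ≤ y ^ α := by
    have hyα : y ^ α = c ^ (1 - α) := hy ▸ rpow_neg_sub_one_div_rpow hc0.le hα0
    rw [hyα, hz]
    exact mul_div_rpow_le_rpow_one_sub (by linarith) hc0 (by linarith) (by linarith)
  rw [rpow_one_sub_inv hc0.le hα0, ← hy]
  calc α / (α - 1) * y⁻¹ / (2 * log 2) = α / (α - 1) * (1 / log 2) * (y⁻¹ / 2) := by ring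
    _ ≤ _ := mul_le_mul_of_nonneg_left
      (inv_div_two_le_rpow_sub_one_div hy0 (by positivity) hmid) (by positivity)

end Renyi

/-- Lower bound on `Γ_{H_α}` at the distribution `r = (0, z, …, z, y)` with
`y = (d-2)^{-(α-1)/α}`, `z = (1-y)/(d-2)`, and the resulting lower bound on any
Lipschitz constant of the α-Rényi entropy w.r.t. total variation distance. -/
theorem stmt18 {d : ℕ} (hd : 3 ≤ d) (α : ℝ) (hα : 1 < α)
    (y z : ℝ)
    (hy : y = ((d : ℝ) - 2) ^ (-((α - 1) / α)))
    (hz : z = (1 - y) / ((d : ℝ) - 2))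
    (r : Fin d → ℝ)
    (hr : r = fun i : Fin d =>
      if (i : ℕ) = 0 then 0 else if (i : ℕ) = d - 1 then y else z)
    (H : (Fin d → ℝ) → ℝ)
    (hH : ∀ p, H p = (1 / (1 - α)) * Real.logb 2 (∑ i, p i ^ α)) :
    (α / (α - 1)) * (1 / Real.log 2) *
        ((y ^ (α - 1) - (0 : ℝ) ^ (α - 1)) / ∑ i, r i ^ α) ≥
      (α / (α - 1)) * ((d : ℝ) - 2) ^ (1 - 1 / α) / (2 * Real.log 2) ∧
    ∀ k : ℝ,
      (∀ p q : Fin d → ℝ,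
        ((∀ i, 0 ≤ p i) ∧ ∑ i, p i = 1) → ((∀ i, 0 ≤ q i) ∧ ∑ i, q i = 1) →
        |H p - H q| ≤ k * ((1 / 2) * ∑ i, |p i - q i|)) →
      (α / (α - 1)) * ((d : ℝ) - 2) ^ (1 - 1 / α) / (2 * Real.log 2) ≤ k := by
  have hc : (1 : ℝ) ≤ (d : ℝ) - 2 := by
    have : (3 : ℝ) ≤ d := by exact_mod_cast hd
    linarith
  have hy0 : 0 < y := hy ▸ rpow_pos_of_pos (by linarith) _
  have hz0 : 0 ≤ z :=
    hz ▸ div_nonneg (by linarith [hy ▸ rpow_neg_sub_one_div_le_one hα.le hc]) (by linarith)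
  have hsum : ∑ i, r i ^ α = y ^ α + ((d : ℝ) - 2) * z ^ α := by
    rw [show r = threePoint d 0 y z from hr]
    simp only [apply_threePoint (· ^ α), sum_threePoint (by omega : 2 ≤ d),
      zero_rpow (by linarith : α ≠ 0), zero_add]
  have hrate := le_renyi_transfer_rate hα hc hy hz
  refine ⟨?_, fun k hk => hrate.trans ?_⟩
  · rwa [zero_rpow (by linarith), sub_zero, hsum]
  · exact renyi_transfer_rate_le_of_lipschitz hα (by omega) hy0 hz0
      (by rw [hz]; field_simp; ring) H hH k hk
end

section
/- For d ≥ 3, the optimal Lipschitz constant (with respect to total variation distance) of the collision entropy H₂(p) = −log₂(Σ_i p_i²) on the probability simplex in ℝ^d equals (d−2)/((√(d−1) − 1)·ln 2); in particular, sup over probability vectors with smallest entry x and largest entry y of (y − x)/(x² + y² + (d−2)z²), z = (1−x−y)/(d−2), is attained at x = 0, y = 1/√(d−1), where it equals (d−2)/(2√(d−1) − 2). -/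
open Finset Real

/-!
Write `s = √(d - 1)`, so that `d - 2 = s² - 1`. Everything rests on the two-point inequality
`2(s - 1)(y - x) ≤ (s² - 1)(x² + y²) + (1 - x - y)²` for `x ≥ 0`. Read with `z = (1 - x - y)/(d - 2)`
it is `h(x, y) ≤ (d - 2)/(2s - 2)`. Combined with Cauchy–Schwarz on the other `d - 2` coordinates it
gives `2 (max r - min r) ≤ (s + 1) ∑ rᵢ²` on the simplex; since `|∑ rᵢ vᵢ| ≤ (max r - min r)/2 · ∑ |vᵢ|`
whenever `∑ vᵢ = 0`, the derivative of `t ↦ log ∑ (q + t (p - q))ᵢ²` is at most `s + 1` times the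
total variation distance of `p` and `q`, and the mean value theorem gives the Lipschitz bound.
Conversely, moving mass `t` from the coordinate `1/s` to the coordinate `0` of `(0, 1/s, z, …, z)`
changes `log ∑ pᵢ²` at rate `2 h(0, 1/s) = s + 1` per unit of total variation, so no smaller
constant works.
-/

lemma two_mul_sub_one_mul_sub_le {s x y : ℝ} (hs : 1 < s) (hx : 0 ≤ x) :
    2 * (s - 1) * (y - x) ≤ (s ^ 2 - 1) * (x ^ 2 + y ^ 2) + (1 - x - y) ^ 2 := by
  nlinarith [sq_nonneg (s ^ 2 * y - s + x),
    mul_nonneg (mul_nonneg hx hx) (by nlinarith [sq_nonneg (s ^ 2 - 1)] : (0 : ℝ) ≤ s ^ 4 - 1),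
    mul_nonneg hx (by nlinarith : (0 : ℝ) ≤ 2 * s * (s - 1) ^ 2)]

lemma exists_one_lt_eq_sq_add_one {d : ℝ} (hd : 3 ≤ d) :
    ∃ s, 1 < s ∧ √(d - 1) = s ∧ d = s ^ 2 + 1 :=
  ⟨√(d - 1), lt_sqrt_of_sq_lt (by linarith), rfl, by rw [sq_sqrt (by linarith)]; ring⟩

lemma sub_two_div_sqrt_sub_one_sub_one {d : ℝ} (hd : 3 ≤ d) :
    (d - 2) / (√(d - 1) - 1) = √(d - 1) + 1 := by
  obtain ⟨s, hs, hs_eq, rfl⟩ := exists_one_lt_eq_sq_add_one hd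
  rw [hs_eq, show s ^ 2 + 1 - 2 = (s - 1) * (s + 1) by ring, mul_div_cancel_left₀ _ (by linarith)]

/-- The paper's `h(x, y)`, that is `ln 2 · Γ_{H₂}` at `(x, z, …, z, y)`. -/
noncomputable def collisionRatio (d x y : ℝ) : ℝ :=
  (y - x) / (x ^ 2 + y ^ 2 + (d - 2) * ((1 - x - y) / (d - 2)) ^ 2)

section Ratio

variable {d : ℝ}

lemma collisionRatio_le (hd : 3 ≤ d) {x y : ℝ} (hx : 0 ≤ x) :
    collisionRatio d x y ≤ (d - 2) / (2 * √(d - 1) - 2) := by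
  obtain ⟨s, hs, hs_eq, rfl⟩ := exists_one_lt_eq_sq_add_one hd
  have hs2 : 0 < s ^ 2 - 1 := by nlinarith
  rw [hs_eq, collisionRatio, show s ^ 2 + 1 - 2 = s ^ 2 - 1 by ring]
  set Q := x ^ 2 + y ^ 2 + (s ^ 2 - 1) * ((1 - x - y) / (s ^ 2 - 1)) ^ 2
  have hQ : (s ^ 2 - 1) * Q = (s ^ 2 - 1) * (x ^ 2 + y ^ 2) + (1 - x - y) ^ 2 := by
    simp only [Q]
    field_simp
  have hkey := two_mul_sub_one_mul_sub_le hs hx (y := y)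
  rcases (show 0 ≤ Q by positivity).eq_or_lt with hQ0 | hQ0
  · rw [← hQ0, div_zero]
    exact div_nonneg (by linarith) (by linarith)
  rw [div_le_div_iff₀ hQ0 (by linarith)]
  nlinarith

lemma collisionRatio_zero_inv_sqrt (hd : 3 ≤ d) :
    collisionRatio d 0 (1 / √(d - 1)) = (d - 2) / (2 * √(d - 1) - 2) := by
  obtain ⟨s, hs, hs_eq, rfl⟩ := exists_one_lt_eq_sq_add_one hd
  rw [hs_eq, collisionRatio, show s ^ 2 + 1 - 2 = (s - 1) * (s + 1) by ring]
  have : s - 1 ≠ 0 := by linarith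
  have : s + 1 ≠ 0 := by linarith
  have : s ≠ 0 := by linarith
  have hden : 0 ^ 2 + (1 / s) ^ 2 + (s - 1) * (s + 1) * ((1 - 0 - 1 / s) / ((s - 1) * (s + 1))) ^ 2
      = 2 / (s * (s + 1)) := by
    field_simp
    ring
  rw [hden, show 2 * s - 2 = 2 * (s - 1) by ring]
  field_simp
  ring

theorem isGreatest_collisionRatio (hd : 3 ≤ d) :
    IsGreatest {v : ℝ | ∃ x y : ℝ, 0 ≤ x ∧ x ≤ 1 / d ∧ 1 / d ≤ y ∧
        x ≤ (1 - x - y) / (d - 2) ∧ (1 - x - y) / (d - 2) ≤ y ∧ v = collisionRatio d x y}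
      ((d - 2) / (2 * √(d - 1) - 2)) := by
  obtain ⟨s, hs, hs_eq, hd_eq⟩ := exists_one_lt_eq_sq_add_one hd
  have hs_inv : 1 / s < 1 := by rw [div_lt_one (by linarith)]; exact hs
  have hz : (1 - 0 - 1 / s) * s = s - 1 := by field_simp; ring
  refine ⟨⟨0, 1 / √(d - 1), le_rfl, ?_, ?_, ?_, ?_, (collisionRatio_zero_inv_sqrt hd).symm⟩, ?_⟩
  · rw [hd_eq]; positivity
  · rw [hs_eq, hd_eq]; exact one_div_le_one_div_of_le (by linarith) (by nlinarith)
  · rw [hs_eq, hd_eq]; exact div_nonneg (by linarith) (by nlinarith)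
  · rw [hs_eq, hd_eq, div_le_div_iff₀ (by nlinarith) (by linarith)]; nlinarith
  · rintro v ⟨x, y, hx, -, -, -, -, rfl⟩
    exact collisionRatio_le hd hx

end Ratio

section ProbabilityVector

variable {ι : Type*} [Fintype ι]

lemma sum_eq_add_add_card_sub_two_mul {a b : ι} (hab : a ≠ b) {g : ι → ℝ} {u v w : ℝ}
    (ha : g a = u) (hb : g b = v) (hw : ∀ i, i ≠ a → i ≠ b → g i = w) :
    ∑ i, g i = u + v + ((Fintype.card ι : ℝ) - 2) * w := by
  have h := Fintype.sum_eq_add (f := fun i => g i - w) a b hab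
    (fun i hi => sub_eq_zero.2 (hw i hi.1 hi.2))
  rw [sum_sub_distrib, sum_const, card_univ, nsmul_eq_mul, ha, hb] at h
  linear_combination h

lemma two_mul_sub_le_sum_sq (hι : 3 ≤ Fintype.card ι) {r : ι → ℝ} (hr : ∑ i, r i = 1)
    {a b : ι} (ha : 0 ≤ r a) :
    2 * (r b - r a) ≤ (√((Fintype.card ι : ℝ) - 1) + 1) * ∑ i, r i ^ 2 := by
  classical
  obtain ⟨s, hs, hs_eq, hcard⟩ :=
    exists_one_lt_eq_sq_add_one (d := Fintype.card ι) (by exact_mod_cast hι)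
  rw [hs_eq]
  rcases eq_or_ne a b with rfl | hab
  · rw [sub_self, mul_zero]; positivity
  have hb : b ∈ univ.erase a := mem_erase.2 ⟨hab.symm, mem_univ b⟩
  set T := (univ.erase a).erase b
  have hT : (#T : ℝ) = s ^ 2 - 1 := by
    rw [card_erase_of_mem hb, card_erase_of_mem (mem_univ a), card_univ, Nat.cast_sub (by omega),
      Nat.cast_sub (by omega), hcard]
    ring
  have hsplit (f : ι → ℝ) : ∑ i, f i = f a + f b + ∑ i ∈ T, f i := by
    rw [← add_sum_erase _ _ (mem_univ a), ← add_sum_erase _ _ hb, add_assoc]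
  have hCS : (1 - r a - r b) ^ 2 ≤ (s ^ 2 - 1) * ∑ i ∈ T, r i ^ 2 := by
    have h := sq_sum_le_card_mul_sum_sq (s := T) (f := r)
    rwa [hT, show ∑ i ∈ T, r i = 1 - r a - r b by linarith [hsplit r]] at h
  have hkey := two_mul_sub_one_mul_sub_le hs ha (y := r b)
  have h : (s - 1) * (2 * (r b - r a)) ≤ (s - 1) * ((s + 1) * ∑ i, r i ^ 2) := by
    nlinarith [hsplit (r · ^ 2)]
  exact le_of_mul_le_mul_left h (by linarith)

lemma abs_sum_mul_le_of_sum_eq_zero_s19 {r v : ι → ℝ} {m M : ℝ} (hv : ∑ i, v i = 0)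
    (hm : ∀ i, m ≤ r i) (hM : ∀ i, r i ≤ M) :
    |∑ i, r i * v i| ≤ (M - m) / 2 * ∑ i, |v i| := by
  have hc : ∑ i, r i * v i = ∑ i, (r i - (m + M) / 2) * v i := by
    simp only [sub_mul, sum_sub_distrib, ← mul_sum, hv, mul_zero, sub_zero]
  rw [hc, mul_sum]
  refine (abs_sum_le_sum_abs _ _).trans (sum_le_sum fun i _ => ?_)
  rw [abs_mul]
  gcongr
  rw [abs_le]
  constructor <;> linarith [hm i, hM i]

lemma two_mul_abs_sum_mul_le (hι : 3 ≤ Fintype.card ι) {r v : ι → ℝ} (hr : r ∈ stdSimplex ℝ ι)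
    (hv : ∑ i, v i = 0) :
    2 * |∑ i, r i * v i|
      ≤ (√((Fintype.card ι : ℝ) - 1) + 1) * ((1 / 2) * ∑ i, |v i|) * ∑ i, r i ^ 2 := by
  have hne : (univ : Finset ι).Nonempty := univ_nonempty_iff.2 (Fintype.card_pos_iff.1 (by omega))
  obtain ⟨a, -, ha⟩ := exists_min_image univ r hne
  obtain ⟨b, -, hb⟩ := exists_max_image univ r hne
  have hspread := abs_sum_mul_le_of_sum_eq_zero_s19 hv (fun i => ha i (mem_univ i))
    (fun i => hb i (mem_univ i))
  have hv_nonneg : 0 ≤ (1 / 2) * ∑ i, |v i| := by positivity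
  calc 2 * |∑ i, r i * v i| ≤ 2 * (r b - r a) * ((1 / 2) * ∑ i, |v i|) := by linarith
    _ ≤ ((√((Fintype.card ι : ℝ) - 1) + 1) * ∑ i, r i ^ 2) * ((1 / 2) * ∑ i, |v i|) :=
      mul_le_mul_of_nonneg_right (two_mul_sub_le_sum_sq hι hr.2 (hr.1 a)) hv_nonneg
    _ = _ := by ring

lemma sum_sq_pos_of_sum_eq_one {r : ι → ℝ} (hr : ∑ i, r i = 1) : 0 < ∑ i, r i ^ 2 := by
  refine (sum_nonneg fun i _ => sq_nonneg (r i)).lt_of_ne fun h => ?_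
  have hr0 := (sum_eq_zero_iff_of_nonneg fun i _ => sq_nonneg (r i)).1 h.symm
  simp_all

lemma abs_log_sum_sq_sub_le (hι : 3 ≤ Fintype.card ι) {p q : ι → ℝ} (hp : p ∈ stdSimplex ℝ ι)
    (hq : q ∈ stdSimplex ℝ ι) :
    |log (∑ i, p i ^ 2) - log (∑ i, q i ^ 2)|
      ≤ (√((Fintype.card ι : ℝ) - 1) + 1) * ((1 / 2) * ∑ i, |p i - q i|) := by
  set r : ℝ → ι → ℝ := fun t i => q i + t * (p i - q i)
  have hr_mem (t : ℝ) (ht : t ∈ Set.Icc 0 1) : r t ∈ stdSimplex ℝ ι := by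
    convert convex_stdSimplex ℝ ι hq hp (sub_nonneg.2 ht.2) ht.1 (by ring) using 1
    ext i
    simp only [r, Pi.add_apply, Pi.smul_apply, smul_eq_mul]
    ring
  have hr_sum (t : ℝ) : ∑ i, r t i = 1 := by
    simp only [r, sum_add_distrib, ← mul_sum, sum_sub_distrib, hp.2, hq.2, sub_self, mul_zero,
      add_zero]
  have hderiv (t : ℝ) : HasDerivAt (fun u => log (∑ i, r u i ^ 2))
      ((2 * ∑ i, r t i * (p i - q i)) / ∑ i, r t i ^ 2) t := by
    have hS : HasDerivAt (fun u => ∑ i, r u i ^ 2) (2 * ∑ i, r t i * (p i - q i)) t := by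
      rw [mul_sum]
      refine HasDerivAt.fun_sum fun i _ => ?_
      have hri : HasDerivAt (fun u => r u i) (p i - q i) t := by
        simpa only [one_mul] using ((hasDerivAt_id' t).mul_const (p i - q i)).const_add (q i)
      exact (hri.fun_pow 2).congr_deriv (by norm_num; ring)
    exact hS.log (sum_sq_pos_of_sum_eq_one (hr_sum t)).ne'
  have hbound (t : ℝ) (ht : t ∈ Set.Icc 0 1) :
      ‖(2 * ∑ i, r t i * (p i - q i)) / ∑ i, r t i ^ 2‖
        ≤ (√((Fintype.card ι : ℝ) - 1) + 1) * ((1 / 2) * ∑ i, |p i - q i|) := by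
    have hv : ∑ i, (p i - q i) = 0 := by rw [sum_sub_distrib, hp.2, hq.2, sub_self]
    have hS := sum_sq_pos_of_sum_eq_one (hr_sum t)
    rw [norm_div, norm_mul, Real.norm_two, Real.norm_of_nonneg hS.le, div_le_iff₀ hS]
    exact two_mul_abs_sum_mul_le hι (hr_mem t ht) hv
  have hmvt := (convex_Icc (0 : ℝ) 1).norm_image_sub_le_of_norm_hasDerivWithin_le
    (fun t _ => (hderiv t).hasDerivWithinAt) hbound (Set.left_mem_Icc.2 zero_le_one)
    (Set.right_mem_Icc.2 zero_le_one)
  simpa [r] using hmvt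

section MassShift

variable [DecidableEq ι] {a b : ι}

noncomputable def massShift (a b : ι) (y t : ℝ) : ι → ℝ :=
  fun i => if i = a then t else if i = b then y - t else (1 - y) / ((Fintype.card ι : ℝ) - 2)

lemma sum_comp_massShift (hab : a ≠ b) (y t : ℝ) (f : ℝ → ℝ) :
    ∑ i, f (massShift a b y t i)
      = f t + f (y - t) + ((Fintype.card ι : ℝ) - 2) * f ((1 - y) / ((Fintype.card ι : ℝ) - 2)) :=
  sum_eq_add_add_card_sub_two_mul hab (by simp [massShift]) (by simp [massShift, hab.symm])
    (fun i ha hb => by simp [massShift, ha, hb])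

lemma massShift_mem_stdSimplex (hι : 3 ≤ Fintype.card ι) (hab : a ≠ b) {y t : ℝ} (hy : y ≤ 1)
    (ht0 : 0 ≤ t) (hty : t ≤ y) : massShift a b y t ∈ stdSimplex ℝ ι := by
  have hc : (0 : ℝ) < (Fintype.card ι : ℝ) - 2 := by
    have : (3 : ℝ) ≤ Fintype.card ι := by exact_mod_cast hι
    linarith
  refine ⟨fun i => ?_, ?_⟩
  · have : 0 ≤ (1 - y) / ((Fintype.card ι : ℝ) - 2) := div_nonneg (by linarith) hc.le
    simp only [massShift]
    split_ifs <;> linarith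
  · have h := sum_comp_massShift hab y t id
    simp only [id] at h
    rw [h, mul_div_cancel₀ _ hc.ne']
    ring

lemma sum_massShift_sq (hab : a ≠ b) (y t : ℝ) :
    ∑ i, massShift a b y t i ^ 2 = ∑ i, massShift a b y 0 i ^ 2 - 2 * t * (y - t) := by
  rw [sum_comp_massShift hab y t (· ^ 2), sum_comp_massShift hab y 0 (· ^ 2)]
  ring

lemma sum_abs_massShift_sub (hab : a ≠ b) (y : ℝ) {t : ℝ} (ht : 0 ≤ t) :
    ∑ i, |massShift a b y 0 i - massShift a b y t i| = 2 * t := by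
  rw [sum_eq_add_add_card_sub_two_mul hab (u := t) (v := t) (w := 0)
    (by simp [massShift, abs_of_nonneg ht]) (by simp [massShift, hab.symm, abs_of_nonneg ht])
    (fun i ha hb => by simp [massShift, ha, hb])]
  ring

end MassShift

lemma two_mul_collisionRatio_le_of_abs_log_sum_sq_sub_le (hι : 3 ≤ Fintype.card ι) {k : ℝ}
    (hk : ∀ p ∈ stdSimplex ℝ ι, ∀ q ∈ stdSimplex ℝ ι,
      |log (∑ i, p i ^ 2) - log (∑ i, q i ^ 2)| ≤ k * ((1 / 2) * ∑ i, |p i - q i|))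
    {y : ℝ} (hy0 : 0 < y) (hy1 : y ≤ 1) :
    2 * collisionRatio (Fintype.card ι) 0 y ≤ k := by
  classical
  obtain ⟨a, b, hab⟩ := Fintype.exists_pair_of_one_lt_card (by omega : 1 < Fintype.card ι)
  set A := ∑ i, massShift a b y 0 i ^ 2
  have hA : 0 < A := sum_sq_pos_of_sum_eq_one (massShift_mem_stdSimplex hι hab hy1 le_rfl hy0.le).2
  have hslope (t : ℝ) (ht : t ∈ Set.Ioo 0 y) : 2 * (y - t) / A ≤ k := by
    have hmem := massShift_mem_stdSimplex hι hab hy1 ht.1.le ht.2.le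
    have hpos : 0 < A - 2 * t * (y - t) := by
      rw [← sum_massShift_sq hab]
      exact sum_sq_pos_of_sum_eq_one hmem.2
    have hlip := hk _ (massShift_mem_stdSimplex hι hab hy1 le_rfl hy0.le) _ hmem
    rw [sum_massShift_sq hab y t, sum_abs_massShift_sub hab y ht.1.le] at hlip
    have hlog := log_le_sub_one_of_pos (div_pos hpos hA)
    rw [log_div hpos.ne' hA.ne'] at hlog
    have h1 : 2 * t * (y - t) / A ≤ k * t := by
      have e : (A - 2 * t * (y - t)) / A - 1 = -(2 * t * (y - t) / A) := by field_simp; ring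
      linarith [(le_abs_self _).trans hlip]
    rw [div_le_iff₀ hA] at h1 ⊢
    nlinarith [ht.1]
  have hlim : Filter.Tendsto (fun t => 2 * (y - t) / A) (nhdsWithin 0 (Set.Ioi 0))
      (nhds (2 * y / A)) := by
    have hcont : Continuous fun t : ℝ => 2 * (y - t) / A := by fun_prop
    simpa using hcont.continuousWithinAt.tendsto (x := 0) (s := Set.Ioi 0)
  have hratio : 2 * collisionRatio (Fintype.card ι) 0 y = 2 * y / A := by
    simp only [A, sum_comp_massShift hab y 0 (· ^ 2), collisionRatio]
    ring
  rw [hratio]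
  exact le_of_tendsto hlim (Filter.eventually_of_mem (Ioo_mem_nhdsGT hy0) hslope)

theorem isLeast_lipschitz_log_sum_sq (hι : 3 ≤ Fintype.card ι) :
    IsLeast {k : ℝ | ∀ p ∈ stdSimplex ℝ ι, ∀ q ∈ stdSimplex ℝ ι,
        |log (∑ i, p i ^ 2) - log (∑ i, q i ^ 2)| ≤ k * ((1 / 2) * ∑ i, |p i - q i|)}
      (√((Fintype.card ι : ℝ) - 1) + 1) := by
  have hc : (3 : ℝ) ≤ Fintype.card ι := by exact_mod_cast hι
  refine ⟨fun p hp q hq => abs_log_sum_sq_sub_le hι hp hq, fun k hk => ?_⟩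
  obtain ⟨s, hs, hs_eq, -⟩ := exists_one_lt_eq_sq_add_one hc
  have h := two_mul_collisionRatio_le_of_abs_log_sum_sq_sub_le hι hk (y := 1 / s) (by positivity)
    (by rw [div_le_one (by linarith)]; linarith)
  rwa [← hs_eq, collisionRatio_zero_inv_sqrt hc, mul_div_assoc',
    show 2 * √((Fintype.card ι : ℝ) - 1) - 2 = 2 * (√((Fintype.card ι : ℝ) - 1) - 1) by ring,
    mul_div_mul_left _ _ two_ne_zero, sub_two_div_sqrt_sub_one_sub_one hc] at h

end ProbabilityVector

lemma abs_neg_logb_sub_neg_logb (b x y : ℝ) :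
    |-logb b x - -logb b y| = |log x - log y| / |log b| := by
  rw [logb, logb, neg_sub_neg, ← sub_div, abs_div, abs_sub_comm]

/-- For `d ≥ 3` the optimal Lipschitz constant of the collision entropy
`H₂(p) = -log₂ ∑ pᵢ²` w.r.t. total variation distance equals
`(d-2)/((√(d-1) - 1) ln 2)`; moreover the supremum of
`h(x,y) = (y-x)/(x² + y² + (d-2)z²)`, `z = (1-x-y)/(d-2)`, over the region
`0 ≤ x ≤ 1/d ≤ y`, `x ≤ z ≤ y`, is attained at `x = 0`, `y = 1/√(d-1)`,
where it equals `(d-2)/(2√(d-1) - 2)`. -/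
theorem stmt19 {d : ℕ} (hd : 3 ≤ d)
    (H2 : (Fin d → ℝ) → ℝ)
    (hH2 : ∀ p, H2 p = -Real.logb 2 (∑ i, p i ^ 2)) :
    IsLeast
      {k : ℝ | ∀ p q : Fin d → ℝ,
        ((∀ i, 0 ≤ p i) ∧ ∑ i, p i = 1) → ((∀ i, 0 ≤ q i) ∧ ∑ i, q i = 1) →
        |H2 p - H2 q| ≤ k * ((1 / 2) * ∑ i, |p i - q i|)}
      (((d : ℝ) - 2) / ((Real.sqrt ((d : ℝ) - 1) - 1) * Real.log 2)) ∧
    (IsGreatest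
      {v : ℝ | ∃ x y : ℝ, 0 ≤ x ∧ x ≤ 1 / d ∧ 1 / d ≤ y ∧
        x ≤ (1 - x - y) / ((d : ℝ) - 2) ∧ (1 - x - y) / ((d : ℝ) - 2) ≤ y ∧
        v = (y - x) /
          (x ^ 2 + y ^ 2 + ((d : ℝ) - 2) * ((1 - x - y) / ((d : ℝ) - 2)) ^ 2)}
      (((d : ℝ) - 2) / (2 * Real.sqrt ((d : ℝ) - 1) - 2)) ∧
    ((1 / Real.sqrt ((d : ℝ) - 1) - 0) /
        (0 ^ 2 + (1 / Real.sqrt ((d : ℝ) - 1)) ^ 2 +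
          ((d : ℝ) - 2) * ((1 - 0 - 1 / Real.sqrt ((d : ℝ) - 1)) / ((d : ℝ) - 2)) ^ 2) =
      ((d : ℝ) - 2) / (2 * Real.sqrt ((d : ℝ) - 1) - 2))) := by
  have hd3 : (3 : ℝ) ≤ d := by exact_mod_cast hd
  have hlog2 : 0 < log 2 := log_pos one_lt_two
  have hlip := isLeast_lipschitz_log_sum_sq (ι := Fin d) (by rwa [Fintype.card_fin])
  rw [Fintype.card_fin] at hlip
  have hκ : ((d : ℝ) - 2) / ((√((d : ℝ) - 1) - 1) * log 2) = (√((d : ℝ) - 1) + 1) / log 2 := by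
    rw [← div_div, sub_two_div_sqrt_sub_one_sub_one hd3]
  have hH (p q : Fin d → ℝ) :
      |H2 p - H2 q| = |log (∑ i, p i ^ 2) - log (∑ i, q i ^ 2)| / log 2 := by
    rw [hH2, hH2, abs_neg_logb_sub_neg_logb, abs_of_pos hlog2]
  refine ⟨⟨fun p q hp hq => ?_, fun k hk => ?_⟩, isGreatest_collisionRatio hd3,
    collisionRatio_zero_inv_sqrt hd3⟩
  · rw [hH, hκ, div_mul_eq_mul_div, div_le_div_iff_of_pos_right hlog2]
    exact hlip.1 p hp q hq
  · rw [hκ, div_le_iff₀ hlog2]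
    refine hlip.2 fun p hp q hq => ?_
    have h := hk p q hp hq
    rw [hH, div_le_iff₀ hlog2] at h
    linarith
end
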